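/- arXiv:1403.4104 — 8 statements merged into one kernel-verified Lean document; each statement's English description precedes it below -/
import Mathlib

section
/- Let n, s ≥ 1 and let Σ ⊆ ℕⁿ × {1,…,s} be stable under addition of ℕⁿ in the first coordinate (i.e., (α,ℓ) ∈ Σ implies (α+γ,ℓ) ∈ Σ for all γ ∈ ℕⁿ). If Σ satisfies Hironaka's box condition, i.e., the complement (ℕⁿ × {1,…,s}) \ Σ is a finite disjoint union of boxes, then Σ is an echelon, i.e., Σ itself is a finite disjoint union of boxes. -/
/-- A box in `ℕⁿ × {1,…,s}`: the set `{(γ+α, ℓ) : α ∈ ℕⁿ, αᵢ = 0 for all i > j}`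
for some `γ ∈ ℕⁿ`, some `ℓ` and some `0 ≤ j ≤ n` (variables being 1-indexed,
the condition `i > j` reads `j ≤ i` for the 0-indexed `i : Fin n`). -/
def IsBox {n s : ℕ} (B : Set ((Fin n → ℕ) × Fin s)) : Prop :=
  ∃ (γ : Fin n → ℕ) (ℓ : Fin s) (j : ℕ), j ≤ n ∧
    B = {q | ∃ α : Fin n → ℕ, (∀ i : Fin n, j ≤ (i : ℕ) → α i = 0) ∧ q = (γ + α, ℓ)}

/-- A subset of `ℕⁿ × {1,…,s}` is a finite disjoint union of boxes. -/
def IsFinDisjUnionOfBoxes {n s : ℕ} (S : Set ((Fin n → ℕ) × Fin s)) : Prop :=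
  ∃ (m : ℕ) (B : Fin m → Set ((Fin n → ℕ) × Fin s)),
    (∀ k, IsBox (B k)) ∧ (∀ k l, k ≠ l → Disjoint (B k) (B l)) ∧ S = ⋃ k, B k

/-! Induction on `n`, slicing along the last coordinate. Choose `T` larger than the last
coordinate of every corner of the boxes making up `Sᶜ`. For `t < T` the slice
`{x | (x, t) ∈ S}` is again stable, and its complement is the disjoint union of the slices of
those boxes, each a box or empty; by induction the slice is an echelon, and lifting its boxes
back to level `t` gives boxes. Above level `T`, a box of `Sᶜ` can only appear if its last
coordinate is free, i.e. if it is a full orthant `γ + ℕⁿ⁺¹` in some component `ℓ`; by stability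
`S` then misses the component `ℓ` altogether. So in each component, the part of `S` above
level `T` is either empty or the whole box `(0, …, 0, T) + ℕⁿ⁺¹`. -/

open Function

variable {n s : ℕ}

def box (γ : Fin n → ℕ) (ℓ : Fin s) (j : ℕ) : Set ((Fin n → ℕ) × Fin s) :=
  {q | ∃ α : Fin n → ℕ, (∀ i : Fin n, j ≤ (i : ℕ) → α i = 0) ∧ q = (γ + α, ℓ)}

lemma mem_box {γ : Fin n → ℕ} {ℓ : Fin s} {j : ℕ} {q : (Fin n → ℕ) × Fin s} :
    q ∈ box γ ℓ j ↔ γ ≤ q.1 ∧ (∀ i : Fin n, j ≤ (i : ℕ) → q.1 i = γ i) ∧ q.2 = ℓ := by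
  constructor
  · rintro ⟨α, hα, rfl⟩
    exact ⟨le_self_add, fun i hi => by simp [hα i hi], rfl⟩
  · rintro ⟨hle, hj, hℓ⟩
    refine ⟨q.1 - γ, fun i hi => by simp [hj i hi], ?_⟩
    rw [add_tsub_cancel_of_le hle, ← hℓ]

lemma box_min_right (γ : Fin n → ℕ) (ℓ : Fin s) (j : ℕ) : box γ ℓ (min j n) = box γ ℓ j := by
  ext q
  have hmin : ∀ i : Fin n, min j n ≤ (i : ℕ) ↔ j ≤ i := fun i => by omega
  simp only [mem_box, hmin]

lemma isBox_box (γ : Fin n → ℕ) (ℓ : Fin s) (j : ℕ) : IsBox (box γ ℓ j) :=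
  ⟨γ, ℓ, min j n, min_le_right j n, (box_min_right γ ℓ j).symm⟩

lemma isBox_iff {B : Set ((Fin n → ℕ) × Fin s)} : IsBox B ↔ ∃ γ ℓ j, B = box γ ℓ j :=
  ⟨fun ⟨γ, ℓ, j, _, hB⟩ => ⟨γ, ℓ, j, hB⟩, fun ⟨γ, ℓ, j, hB⟩ => hB ▸ isBox_box γ ℓ j⟩

lemma pairwise_disjoint_box (γ : Fin n → ℕ) (j : ℕ) :
    Pairwise (Disjoint on fun ℓ : Fin s => box γ ℓ j) := fun _ _ h =>
  (pairwise_disjoint_fiber Prod.snd h).mono (fun _ hq => (mem_box.1 hq).2.2)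
    (fun _ hq => (mem_box.1 hq).2.2)

namespace IsFinDisjUnionOfBoxes

lemma of_finite {ι : Type*} [Finite ι] {B : ι → Set ((Fin n → ℕ) × Fin s)}
    (hB : ∀ i, IsBox (B i)) (hd : Pairwise (Disjoint on B)) :
    IsFinDisjUnionOfBoxes (⋃ i, B i) := by
  let e := Finite.equivFin ι
  exact ⟨Nat.card ι, B ∘ e.symm, fun k => hB _, fun k l hkl => hd (e.symm.injective.ne hkl),
    (e.symm.surjective.iUnion_comp B).symm⟩

lemma empty : IsFinDisjUnionOfBoxes (∅ : Set ((Fin n → ℕ) × Fin s)) := by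
  simpa using of_finite (ι := Empty) (B := Empty.elim) (fun i => i.elim) (fun i => i.elim)

lemma _root_.IsBox.isFinDisjUnionOfBoxes {B : Set ((Fin n → ℕ) × Fin s)} (hB : IsBox B) :
    IsFinDisjUnionOfBoxes B := by
  simpa only [Set.iUnion_const] using of_finite (ι := Unit) (fun _ => hB) Subsingleton.pairwise

lemma iUnion {ι : Type*} [Finite ι] {A : ι → Set ((Fin n → ℕ) × Fin s)}
    (hA : ∀ i, IsFinDisjUnionOfBoxes (A i)) (hd : Pairwise (Disjoint on A)) :
    IsFinDisjUnionOfBoxes (⋃ i, A i) := by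
  choose m B hB hBd hAB using hA
  have hdisj : Pairwise (Disjoint on fun p : Σ i, Fin (m i) => B p.1 p.2) := by
    rintro ⟨i, k⟩ ⟨i', k'⟩ hne
    by_cases hi : i = i'
    · subst hi
      exact hBd i k k' fun h => hne (h ▸ rfl)
    · exact (hd hi).mono ((Set.subset_iUnion _ k).trans (hAB i).ge)
        ((Set.subset_iUnion _ k').trans (hAB i').ge)
  have := of_finite (fun p : Σ i, Fin (m i) => hB p.1 p.2) hdisj
  rwa [Set.iUnion_sigma, ← Set.iUnion_congr hAB] at this

lemma union {A A' : Set ((Fin n → ℕ) × Fin s)} (hA : IsFinDisjUnionOfBoxes A)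
    (hA' : IsFinDisjUnionOfBoxes A') (hd : Disjoint A A') : IsFinDisjUnionOfBoxes (A ∪ A') := by
  rw [Set.union_eq_iUnion]
  exact iUnion (Bool.forall_bool.2 ⟨hA', hA⟩) (pairwise_disjoint_on_bool.2 hd)

end IsFinDisjUnionOfBoxes

lemma box_zero_right (γ : Fin n → ℕ) (ℓ : Fin s) : box γ ℓ 0 = {(γ, ℓ)} := by
  ext q
  simp only [mem_box, zero_le, forall_const, Set.mem_singleton_iff, Prod.ext_iff, funext_iff]
  exact ⟨fun h => ⟨h.2.1, h.2.2⟩, fun h => ⟨fun i => (h.1 i).ge, h.1, h.2⟩⟩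

lemma isFinDisjUnionOfBoxes_of_fin_zero (S : Set ((Fin 0 → ℕ) × Fin s)) :
    IsFinDisjUnionOfBoxes S := by
  have hS : S = ⋃ ℓ : {ℓ // (0, ℓ) ∈ S}, box 0 ℓ.1 0 := by
    ext q
    have hq : q = (0, q.2) := Prod.ext (Subsingleton.elim _ _) rfl
    simp only [box_zero_right, Set.mem_iUnion, Set.mem_singleton_iff, Subtype.exists,
      exists_prop]
    exact ⟨fun h => ⟨q.2, hq ▸ h, hq⟩, fun ⟨ℓ, hℓ, h⟩ => h ▸ hℓ⟩
  rw [hS]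
  exact .of_finite (fun ℓ => isBox_box _ _ _)
    ((pairwise_disjoint_box _ _).comp_of_injective Subtype.val_injective)

def IsStable (S : Set ((Fin n → ℕ) × Fin s)) : Prop :=
  ∀ p ∈ S, ∀ γ : Fin n → ℕ, (p.1 + γ, p.2) ∈ S

lemma IsStable.forall_snd_ne_of_disjoint_box {S : Set ((Fin n → ℕ) × Fin s)} (hS : IsStable S)
    {γ : Fin n → ℕ} {ℓ : Fin s} {j : ℕ} (hj : n ≤ j) (h : Disjoint S (box γ ℓ j)) :
    ∀ p ∈ S, p.2 ≠ ℓ := fun p hp hpℓ =>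
  Set.disjoint_left.1 h (hS p hp γ)
    (mem_box.2 ⟨le_add_self, fun i hi => absurd i.is_lt (by omega), hpℓ⟩)

lemma IsFinDisjUnionOfBoxes.exists_cover_lt {A : Set ((Fin n → ℕ) × Fin s)}
    (hA : IsFinDisjUnionOfBoxes A) (i : Fin n) :
    ∃ T, ∀ q ∈ A, ∃ γ ℓ j, γ i < T ∧ box γ ℓ j ⊆ A ∧ q ∈ box γ ℓ j := by
  obtain ⟨m, B, hB, -, rfl⟩ := hA
  choose γ ℓ j hBγ using fun k => isBox_iff.1 (hB k)
  obtain ⟨M, hM⟩ := Finite.exists_le fun k => γ k i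
  refine ⟨M + 1, fun q hq => ?_⟩
  obtain ⟨k, hk⟩ := Set.mem_iUnion.1 hq
  exact ⟨γ k, ℓ k, j k, Nat.lt_succ_of_le (hM k), hBγ k ▸ Set.subset_iUnion B k, hBγ k ▸ hk⟩

def snocLast (t : ℕ) (q : (Fin n → ℕ) × Fin s) : (Fin (n + 1) → ℕ) × Fin s :=
  (Fin.snoc q.1 t, q.2)

lemma snocLast_injective (t : ℕ) : Injective (snocLast (n := n) (s := s) t) := by
  intro p q h
  simp only [snocLast, Prod.mk.injEq] at h
  exact Prod.ext (Fin.snoc_left_injective (α := fun _ => ℕ) t h.1) h.2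

lemma snocLast_init (q : (Fin (n + 1) → ℕ) × Fin s) :
    snocLast (q.1 (Fin.last n)) (Fin.init q.1, q.2) = q := by
  simp [snocLast, Fin.snoc_init_self]

lemma range_snocLast (t : ℕ) :
    Set.range (snocLast (n := n) (s := s) t) = {q | q.1 (Fin.last n) = t} := by
  ext q
  refine ⟨?_, fun hq => ⟨(Fin.init q.1, q.2), hq ▸ snocLast_init q⟩⟩
  rintro ⟨p, rfl⟩
  simp [snocLast]

lemma snocLast_mem_box {t c : ℕ} {γ : Fin n → ℕ} {ℓ : Fin s} {j : ℕ}
    {q : (Fin n → ℕ) × Fin s} :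
    snocLast t q ∈ box (Fin.snoc γ c) ℓ j ↔ c ≤ t ∧ (j ≤ n → t = c) ∧ q ∈ box γ ℓ j := by
  simp only [mem_box, snocLast, Pi.le_def, Fin.forall_fin_succ', Fin.snoc_castSucc,
    Fin.snoc_last, Fin.val_castSucc, Fin.val_last]
  tauto

lemma IsStable.preimage_snocLast {S : Set ((Fin (n + 1) → ℕ) × Fin s)} (hS : IsStable S)
    (t : ℕ) : IsStable (snocLast t ⁻¹' S) := by
  intro p hp γ
  have h : snocLast t (p.1 + γ, p.2) = ((snocLast t p).1 + Fin.snoc γ 0, (snocLast t p).2) := by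
    refine Prod.ext (funext fun i => ?_) rfl
    refine Fin.lastCases ?_ (fun i => ?_) i <;> simp [snocLast]
  show snocLast t _ ∈ S
  rw [h]
  exact hS _ hp _

lemma preimage_snocLast_box (t c : ℕ) (γ : Fin n → ℕ) (ℓ : Fin s) (j : ℕ) :
    snocLast t ⁻¹' box (Fin.snoc γ c) ℓ j = if c ≤ t ∧ (j ≤ n → t = c) then box γ ℓ j else ∅ := by
  ext q
  split_ifs with h
  · exact ⟨fun hq => (snocLast_mem_box.1 hq).2.2, fun hq => snocLast_mem_box.2 ⟨h.1, h.2, hq⟩⟩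
  · simpa [snocLast_mem_box] using fun h₁ h₂ _ => h ⟨h₁, h₂⟩

lemma image_snocLast_box (t : ℕ) (γ : Fin n → ℕ) (ℓ : Fin s) {j : ℕ} (hj : j ≤ n) :
    snocLast t '' box γ ℓ j = box (Fin.snoc γ t) ℓ j := by
  ext q
  constructor
  · rintro ⟨p, hp, rfl⟩
    exact snocLast_mem_box.2 ⟨le_rfl, fun _ => rfl, hp⟩
  · intro hq
    rw [← snocLast_init q, snocLast_mem_box] at hq
    obtain ⟨-, hlast, hp⟩ := hq
    exact ⟨_, hp, by rw [← hlast hj, snocLast_init]⟩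

lemma IsBox.preimage_snocLast {B : Set ((Fin (n + 1) → ℕ) × Fin s)} (hB : IsBox B) (t : ℕ) :
    IsBox (snocLast t ⁻¹' B) ∨ snocLast t ⁻¹' B = ∅ := by
  obtain ⟨γ, ℓ, j, rfl⟩ := isBox_iff.1 hB
  rw [← Fin.snoc_init_self γ, preimage_snocLast_box]
  split_ifs
  exacts [Or.inl (isBox_box _ _ _), Or.inr rfl]

lemma IsBox.image_snocLast {B : Set ((Fin n → ℕ) × Fin s)} (hB : IsBox B) (t : ℕ) :
    IsBox (snocLast t '' B) := by
  obtain ⟨γ, ℓ, j, hj, rfl⟩ := hB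
  rw [← box, image_snocLast_box t γ ℓ hj]
  exact isBox_box _ _ _

lemma IsFinDisjUnionOfBoxes.preimage_snocLast {A : Set ((Fin (n + 1) → ℕ) × Fin s)}
    (hA : IsFinDisjUnionOfBoxes A) (t : ℕ) : IsFinDisjUnionOfBoxes (snocLast t ⁻¹' A) := by
  obtain ⟨m, B, hB, hd, rfl⟩ := hA
  rw [Set.preimage_iUnion]
  exact .iUnion (fun k => ((hB k).preimage_snocLast t).elim IsBox.isFinDisjUnionOfBoxes
    fun h => h ▸ .empty) fun k l hkl => (hd k l hkl).preimage _

lemma IsFinDisjUnionOfBoxes.image_snocLast {A : Set ((Fin n → ℕ) × Fin s)}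
    (hA : IsFinDisjUnionOfBoxes A) (t : ℕ) : IsFinDisjUnionOfBoxes (snocLast t '' A) := by
  obtain ⟨m, B, hB, hd, rfl⟩ := hA
  rw [Set.image_iUnion]
  exact .of_finite (fun k => (hB k).image_snocLast t)
    fun k l hkl => (Set.disjoint_image_iff (snocLast_injective t)).2 (hd k l hkl)

lemma mem_box_snoc_zero {T : ℕ} {ℓ : Fin s} {q : (Fin (n + 1) → ℕ) × Fin s} :
    q ∈ box (Fin.snoc 0 T) ℓ (n + 1) ↔ T ≤ q.1 (Fin.last n) ∧ q.2 = ℓ := by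
  have h := snocLast_mem_box (t := q.1 (Fin.last n)) (c := T) (γ := 0) (ℓ := ℓ) (j := n + 1)
    (q := (Fin.init q.1, q.2))
  rw [snocLast_init] at h
  rw [h, mem_box]
  simp

lemma IsStable.box_subset_or_disjoint {S : Set ((Fin (n + 1) → ℕ) × Fin s)} (hS : IsStable S)
    {T : ℕ} (hT : ∀ q ∈ Sᶜ, ∃ γ ℓ j, γ (Fin.last n) < T ∧ box γ ℓ j ⊆ Sᶜ ∧ q ∈ box γ ℓ j)
    (ℓ : Fin s) : box (Fin.snoc 0 T) ℓ (n + 1) ⊆ S ∨ Disjoint S (box (Fin.snoc 0 T) ℓ (n + 1)) := by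
  refine or_iff_not_imp_left.2 fun hsub => ?_
  obtain ⟨q, hq, hqS⟩ := Set.not_subset.1 hsub
  obtain ⟨γ, ℓ', j, hγ, hB, hqB⟩ := hT q hqS
  obtain ⟨hTq, rfl⟩ := mem_box_snoc_zero.1 hq
  obtain ⟨-, hj, hℓ'⟩ := mem_box.1 hqB
  have hnj : n + 1 ≤ j := by
    by_contra hlt
    have := hj (Fin.last n) (by simp only [Fin.val_last]; omega)
    omega
  have hSℓ' := hS.forall_snd_ne_of_disjoint_box hnj (disjoint_compl_right.mono_right hB)
  exact Set.disjoint_left.2 fun p hp hpB => hSℓ' p hp ((mem_box_snoc_zero.1 hpB).2.trans hℓ')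

lemma IsStable.isFinDisjUnionOfBoxes_inter_le_last {S : Set ((Fin (n + 1) → ℕ) × Fin s)}
    (hS : IsStable S) {T : ℕ}
    (hT : ∀ q ∈ Sᶜ, ∃ γ ℓ j, γ (Fin.last n) < T ∧ box γ ℓ j ⊆ Sᶜ ∧ q ∈ box γ ℓ j) :
    IsFinDisjUnionOfBoxes (S ∩ {q | T ≤ q.1 (Fin.last n)}) := by
  have hS_eq : S ∩ {q | T ≤ q.1 (Fin.last n)} =
      ⋃ ℓ : {ℓ // box (Fin.snoc 0 T) ℓ (n + 1) ⊆ S}, box (Fin.snoc 0 T) ℓ.1 (n + 1) := by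
    ext q
    simp only [Set.mem_inter_iff, Set.mem_ofPred_eq, Set.mem_iUnion, Subtype.exists, exists_prop]
    constructor
    · rintro ⟨hqS, hTq⟩
      have hq : q ∈ box (Fin.snoc 0 T) q.2 (n + 1) := mem_box_snoc_zero.2 ⟨hTq, rfl⟩
      exact ⟨q.2, (hS.box_subset_or_disjoint hT q.2).resolve_right
        (Set.not_disjoint_iff.2 ⟨q, hqS, hq⟩), hq⟩
    · rintro ⟨ℓ, hℓ, hq⟩
      exact ⟨hℓ hq, (mem_box_snoc_zero.1 hq).1⟩
  rw [hS_eq]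
  exact .of_finite (fun ℓ => isBox_box _ _ _)
    ((pairwise_disjoint_box _ _).comp_of_injective Subtype.val_injective)

lemma isFinDisjUnionOfBoxes_of_slices {S : Set ((Fin (n + 1) → ℕ) × Fin s)} (T : ℕ)
    (hslice : ∀ t < T, IsFinDisjUnionOfBoxes (snocLast t ⁻¹' S))
    (htop : IsFinDisjUnionOfBoxes (S ∩ {q | T ≤ q.1 (Fin.last n)})) :
    IsFinDisjUnionOfBoxes S := by
  set level : (Fin (n + 1) → ℕ) × Fin s → ℕ := fun q => q.1 (Fin.last n)
  have hlevel (t : ℕ) : snocLast t '' (snocLast t ⁻¹' S) = S ∩ level ⁻¹' {t} := by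
    rw [Set.image_preimage_eq_inter_range, range_snocLast]
    rfl
  have hS : S = (⋃ t : Fin T, S ∩ level ⁻¹' {(t : ℕ)}) ∪ (S ∩ {q | T ≤ level q}) := by
    ext q
    simp only [Set.mem_union, Set.mem_iUnion, Set.mem_inter_iff, Set.mem_preimage,
      Set.mem_singleton_iff, Set.mem_ofPred_eq]
    refine ⟨fun hq => ?_, by rintro (⟨t, hq, -⟩ | ⟨hq, -⟩) <;> exact hq⟩
    by_cases h : level q < T
    exacts [Or.inl ⟨⟨_, h⟩, hq, rfl⟩, Or.inr ⟨hq, not_lt.1 h⟩]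
  rw [hS]
  refine .union (.iUnion (fun t => hlevel t ▸ (hslice t t.2).image_snocLast t) fun t t' h => ?_)
    htop ?_
  · exact ((pairwise_disjoint_fiber level) (Fin.val_injective.ne h)).mono
      Set.inter_subset_right Set.inter_subset_right
  · refine Set.disjoint_iUnion_left.2 fun t => Set.disjoint_left.2 fun q hq hq' => ?_
    have h₁ : level q = t := hq.2
    have h₂ : T ≤ level q := hq'.2
    omega

theorem IsStable.isFinDisjUnionOfBoxes :
    ∀ {n : ℕ} {S : Set ((Fin n → ℕ) × Fin s)},
      IsStable S → IsFinDisjUnionOfBoxes Sᶜ → IsFinDisjUnionOfBoxes S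
  | 0, S, _, _ => isFinDisjUnionOfBoxes_of_fin_zero S
  | n + 1, S, hS, hSc => by
    obtain ⟨T, hT⟩ := hSc.exists_cover_lt (Fin.last n)
    refine isFinDisjUnionOfBoxes_of_slices T (fun t _ => ?_)
      (hS.isFinDisjUnionOfBoxes_inter_le_last hT)
    exact (hS.preimage_snocLast t).isFinDisjUnionOfBoxes
      (by simpa only [Set.preimage_compl] using hSc.preimage_snocLast t)

theorem monomial_module_box_condition_implies_echelon_general
    (n s : ℕ) (S : Set ((Fin n → ℕ) × Fin s))
    (hstab : ∀ p ∈ S, ∀ γ : Fin n → ℕ, (p.1 + γ, p.2) ∈ S)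
    (hbox : IsFinDisjUnionOfBoxes Sᶜ) :
    IsFinDisjUnionOfBoxes S :=
  IsStable.isFinDisjUnionOfBoxes hstab hbox

/-- Monomial submodules (stable sets) satisfying Hironaka's box condition are echelons. -/
theorem monomial_module_box_condition_implies_echelon
    (n s : ℕ) (hn : 1 ≤ n) (hs : 1 ≤ s) (S : Set ((Fin n → ℕ) × Fin s))
    (hstab : ∀ p ∈ S, ∀ γ : Fin n → ℕ, (p.1 + γ, p.2) ∈ S)
    (hbox : IsFinDisjUnionOfBoxes Sᶜ) :
    IsFinDisjUnionOfBoxes S :=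
  monomial_module_box_condition_implies_echelon_general n s S hstab hbox
end

section
/- Let E = {β ∈ ℕ³ : β ≥ (1,1,0) or β ≥ (1,0,1) or β ≥ (0,1,1) componentwise}, the exponent set of the monomial ideal of K[x₁,x₂,x₃] generated by x₁x₂, x₁x₃ and x₂x₃. Then for every permutation σ of {1,2,3}, E is not a finite disjoint union of σ-boxes; that is, E cannot be written as a finite disjoint union of sets of the form {γ + α : α ∈ ℕ³ with α_{σ(i)} = 0 for all i > j}, where γ ∈ ℕ³ and 0 ≤ j ≤ 3. In particular the ideal (x₁x₂, x₁x₃, x₂x₃) is not an echelon for any ordering of the variables. -/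
/-!
Let `c = σ 2` be the last variable. A `σ`-box with `j < 3` has constant `c`-coordinate, so a box
containing two points with different `c`-coordinates is a full orthant `Ici γ`. The points
`e_x + (n + 1) e_c`, for `x = σ 0` and for `x = σ 1`, all lie in the exponent set `E`, so
pigeonhole gives orthant boxes `Ici γ` with `γ (σ 1) = 0` and `Ici δ` with `δ (σ 0) = 0`.
Two orthants always meet (in `γ ⊔ δ`), so disjointness forces them to be the same box and
`γ = δ`. Then `γ ∈ E` has two vanishing coordinates, which is impossible.
-/

open Function Set

/-- For a permutation `σ` of `{1,2,3}`, a `σ`-box in `ℕ³` is a set of the form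
`{γ + α : α ∈ ℕ³, α_{σ(i)} = 0 for all i > j}` for some `γ ∈ ℕ³` and `0 ≤ j ≤ 3`
(with 0-indexed `i : Fin 3`, the condition `i > j` reads `j ≤ i`). -/
def IsSigmaBox (σ : Equiv.Perm (Fin 3)) (B : Set (Fin 3 → ℕ)) : Prop :=
  ∃ (γ : Fin 3 → ℕ) (j : ℕ), j ≤ 3 ∧
    B = {β | ∃ α : Fin 3 → ℕ, (∀ i : Fin 3, j ≤ (i : ℕ) → α (σ i) = 0) ∧ β = γ + α}

/-- A subset of `ℕ³` is an echelon with respect to `σ` if it is a finite disjoint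
union of `σ`-boxes. -/
def IsSigmaEchelon (σ : Equiv.Perm (Fin 3)) (E : Set (Fin 3 → ℕ)) : Prop :=
  ∃ (m : ℕ) (B : Fin m → Set (Fin 3 → ℕ)),
    (∀ k, IsSigmaBox σ (B k)) ∧ (∀ k l, k ≠ l → Disjoint (B k) (B l)) ∧ E = ⋃ k, B k

lemma eq_of_pairwise_disjoint_of_eq_Ici {ι α : Type*} [SemilatticeSup α] {B : ι → Set α}
    (hB : Pairwise (Disjoint on B)) {k l : ι} {a b : α} (hk : B k = Ici a) (hl : B l = Ici b) :
    a = b := by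
  have hkl : k = l := hB.eq <| not_disjoint_iff_nonempty_inter.mpr <| by
    rw [hk, hl, Ici_inter_Ici]
    exact nonempty_Ici
  subst hkl
  exact Ici_inj.mp (hk.symm.trans hl)

section Boxes

variable {σ : Equiv.Perm (Fin 3)}

lemma IsSigmaBox.exists_eq_Ici_of_apply_ne {B : Set (Fin 3 → ℕ)} (hB : IsSigmaBox σ B)
    {β β' : Fin 3 → ℕ} (hβ : β ∈ B) (hβ' : β' ∈ B) (hne : β (σ 2) ≠ β' (σ 2)) :
    ∃ γ, B = Ici γ := by
  obtain ⟨γ, j, hj, rfl⟩ := hB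
  refine ⟨γ, ?_⟩
  obtain rfl | hj2 : j = 3 ∨ j ≤ 2 := by omega
  · ext β
    simp only [mem_ofPred_eq, mem_Ici, le_iff_exists_add (a := γ)]
    exact exists_congr fun α => and_iff_right fun i hi => absurd i.isLt (by omega)
  · obtain ⟨α, hα, rfl⟩ := hβ
    obtain ⟨α', hα', rfl⟩ := hβ'
    have h2 : j ≤ ((2 : Fin 3) : ℕ) := by simpa using hj2
    simp [hα 2 h2, hα' 2 h2] at hne

lemma exists_eq_Ici_le_of_forall_mem_iUnion {m : ℕ} {B : Fin m → Set (Fin 3 → ℕ)}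
    (hB : ∀ k, IsSigmaBox σ (B k)) {p : ℕ → Fin 3 → ℕ} (hp : ∀ n, p n ∈ ⋃ k, B k)
    (hinj : Injective fun n => p n (σ 2)) : ∃ k γ n, B k = Ici γ ∧ γ ≤ p n := by
  choose f hf using fun n => mem_iUnion.mp (hp n)
  obtain ⟨n, n', hne, hfn⟩ := Finite.exists_ne_map_eq_of_infinite f
  obtain ⟨γ, hγ⟩ := (hB (f n)).exists_eq_Ici_of_apply_ne (hf n) (hfn ▸ hf n') (hinj.ne hne)
  exact ⟨f n, γ, n, hγ, by simpa [hγ] using hf n⟩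

end Boxes

def atLeastTwoPos : Set (Fin 3 → ℕ) := {β | ∃ i j, i ≠ j ∧ 0 < β i ∧ 0 < β j}

lemma setOf_eq_atLeastTwoPos :
    {β : Fin 3 → ℕ | (1 ≤ β 0 ∧ 1 ≤ β 1 ∧ 0 ≤ β 2) ∨ (1 ≤ β 0 ∧ 0 ≤ β 1 ∧ 1 ≤ β 2) ∨
      (0 ≤ β 0 ∧ 1 ≤ β 1 ∧ 1 ≤ β 2)} = atLeastTwoPos := by
  ext β
  constructor
  · rintro (⟨h0, h1, -⟩ | ⟨h0, -, h2⟩ | ⟨-, h1, h2⟩)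
    · exact ⟨0, 1, by decide, h0, h1⟩
    · exact ⟨0, 2, by decide, h0, h2⟩
    · exact ⟨1, 2, by decide, h1, h2⟩
  · rintro ⟨i, j, hij, hi, hj⟩
    fin_cases i <;> fin_cases j <;> simp_all <;> omega

lemma notMem_atLeastTwoPos {β : Fin 3 → ℕ} {x y : Fin 3} (hxy : x ≠ y) (hx : β x = 0)
    (hy : β y = 0) : β ∉ atLeastTwoPos := by
  rintro ⟨i, j, hij, hi, hj⟩
  fin_cases x <;> fin_cases y <;> fin_cases i <;> fin_cases j <;> simp_all

lemma single_add_single_mem_atLeastTwoPos {x y : Fin 3} (hxy : x ≠ y) (n : ℕ) :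
    Pi.single x 1 + Pi.single y (n + 1) ∈ atLeastTwoPos :=
  ⟨x, y, hxy, by simp [hxy], by simp [hxy.symm]⟩

lemma exists_eq_Ici_apply_eq_zero {σ : Equiv.Perm (Fin 3)} {m : ℕ}
    {B : Fin m → Set (Fin 3 → ℕ)} (hB : ∀ k, IsSigmaBox σ (B k))
    (hE : atLeastTwoPos = ⋃ k, B k) {x y : Fin 3} (hxy : x ≠ y) (hx : x ≠ σ 2)
    (hy : y ≠ σ 2) : ∃ k γ, B k = Ici γ ∧ γ y = 0 := by
  obtain ⟨k, γ, n, hk, hγ⟩ := exists_eq_Ici_le_of_forall_mem_iUnion hB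
    (fun n => hE ▸ single_add_single_mem_atLeastTwoPos hx n)
    (fun n n' h => by simpa [hx.symm] using h)
  exact ⟨k, γ, hk, by simpa [hxy.symm, hy] using hγ y⟩

/-- The exponent set of the monomial ideal `(x₁x₂, x₁x₃, x₂x₃)` is not an echelon
for any ordering of the variables. -/
theorem ideal_xy_xz_yz_not_echelon :
    ∀ σ : Equiv.Perm (Fin 3),
      ¬ IsSigmaEchelon σ
        {β : Fin 3 → ℕ |
          (1 ≤ β 0 ∧ 1 ≤ β 1 ∧ 0 ≤ β 2) ∨
          (1 ≤ β 0 ∧ 0 ≤ β 1 ∧ 1 ≤ β 2) ∨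
          (0 ≤ β 0 ∧ 1 ≤ β 1 ∧ 1 ≤ β 2)} := by
  rintro σ ⟨m, B, hbox, hdisj, hE⟩
  rw [setOf_eq_atLeastTwoPos] at hE
  have h01 : σ 0 ≠ σ 1 := σ.injective.ne (by decide)
  have h02 : σ 0 ≠ σ 2 := σ.injective.ne (by decide)
  have h12 : σ 1 ≠ σ 2 := σ.injective.ne (by decide)
  obtain ⟨k, γ, hk, hγ1⟩ := exists_eq_Ici_apply_eq_zero hbox hE h01 h02 h12
  obtain ⟨l, δ, hl, hδ0⟩ := exists_eq_Ici_apply_eq_zero hbox hE h01.symm h12 h02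
  obtain rfl : γ = δ := eq_of_pairwise_disjoint_of_eq_Ici hdisj hk hl
  have hγ : γ ∈ atLeastTwoPos := hE ▸ mem_iUnion_of_mem k (hk ▸ self_mem_Ici)
  exact notMem_atLeastTwoPos h01 hδ0 hγ1 hγ
end

section
/- Let K be a field, n, s ≥ 1, < a monomial order on ℕⁿ × {1,…,s}, and I a submodule of K[[x₁,…,xₙ]]^s. Then K[[x]]^s = I ⊕ co(I): every f ∈ K[[x]]^s can be written uniquely as f = g + h with g ∈ I and h ∈ co(I). -/
open MvPowerSeries

/-- A monomial order on `(Fin n →₀ ℕ) × Fin s`. -/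
structure MonOrder (n s : ℕ) where
  lt : ((Fin n →₀ ℕ) × Fin s) → ((Fin n →₀ ℕ) × Fin s) → Prop
  trichotomous : ∀ a b, lt a b ∨ a = b ∨ lt b a
  trans : ∀ a b c, lt a b → lt b c → lt a c
  add_compat : ∀ a b (γ : Fin n →₀ ℕ), lt a b → lt (a.1 + γ, a.2) (b.1 + γ, b.2)
  zero_min : ∀ (α : Fin n →₀ ℕ) (ℓ : Fin s), (0 : Fin n →₀ ℕ) = α ∨ lt (0, ℓ) (α, ℓ)
  wf : WellFounded lt

variable {K : Type*} [Field K] {n s : ℕ}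

/-- Support of a power series vector. -/
def vsupp (g : Fin s → MvPowerSeries (Fin n) K) : Set ((Fin n →₀ ℕ) × Fin s) :=
  {p | MvPowerSeries.coeff p.1 (g p.2) ≠ 0}

/-- The monomial vector `x^α · e_ℓ`. -/
noncomputable def monVec (K : Type*) [Field K] {n s : ℕ} (α : Fin n →₀ ℕ) (ℓ : Fin s) :
    Fin s → MvPowerSeries (Fin n) K :=
  Pi.single ℓ (MvPowerSeries.monomial α (1 : K))

/-- `(α,ℓ)` is the exponent of the initial monomial vector of `g`. -/
def IsInitial (o : MonOrder n s) (g : Fin s → MvPowerSeries (Fin n) K)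
    (p : (Fin n →₀ ℕ) × Fin s) : Prop :=
  p ∈ vsupp g ∧ ∀ q ∈ vsupp g, q ≠ p → o.lt p q

/-- The initial module of a submodule `I` of `K[[x]]^s`. -/
noncomputable def inMod (o : MonOrder n s)
    (I : Submodule (MvPowerSeries (Fin n) K) (Fin s → MvPowerSeries (Fin n) K)) :
    Submodule (MvPowerSeries (Fin n) K) (Fin s → MvPowerSeries (Fin n) K) :=
  Submodule.span _ {v | ∃ g ∈ I, g ≠ 0 ∧ ∃ p, IsInitial o g p ∧ v = monVec K p.1 p.2}

/-- The canonical direct monomial complement of `in(I)`. -/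
def coMod (o : MonOrder n s)
    (I : Submodule (MvPowerSeries (Fin n) K) (Fin s → MvPowerSeries (Fin n) K)) :
    Set (Fin s → MvPowerSeries (Fin n) K) :=
  {h | ∀ p ∈ vsupp h, monVec K p.1 p.2 ∉ inMod o I}

/-! By Dickson's lemma, finitely many elements `G q` of `I`, normalised to `G q = x^q + R q` with
`R q` supported strictly above `q`, have initial monomials dividing every monomial of `in(I)`.
Dividing `f` by them is a well-founded recursion along the monomial order: the coefficient of `f`
at a monomial `b` of `in(I)` is cancelled by a multiplier coefficient determined by the finitely
many earlier ones, because every coefficient of a product of power series is a finite sum. The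
remainder then lies in `co(I)`. Uniqueness holds because a nonzero element of `I` has its
initial monomial in `in(I)`, whereas a difference of two elements of `co(I)` has none of its
support there. -/

theorem WellFounded.exists_forall_eq_of_congr {α β : Type*} [Nonempty β] {r : α → α → Prop}
    (hr : WellFounded r) (Φ : α → (α → β) → β)
    (hΦ : ∀ a c c', (∀ b, r b a → c b = c' b) → Φ a c = Φ a c') :
    ∃ c : α → β, ∀ a, c a = Φ a c := by
  classical
  refine ⟨hr.fix fun a rec => Φ a fun b => if h : r b a then rec b h else Classical.arbitrary β,
    fun a => ?_⟩
  rw [hr.fix_eq]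
  exact hΦ _ _ _ fun b hb => dif_pos hb

theorem exists_finset_forall_exists_le {α ι : Type*} [PartialOrder α] [WellQuasiOrderedLE α]
    [Finite ι] (S : Set (α × ι)) :
    ∃ F : Finset (α × ι), ↑F ⊆ S ∧ ∀ p ∈ S, ∃ q ∈ F, q.2 = p.2 ∧ q.1 ≤ p.1 := by
  set M : Set (α × ι) := ⋃ ℓ, (·, ℓ) '' {a | Minimal (fun a => (a, ℓ) ∈ S) a}
  have hM : M.Finite := Set.finite_iUnion fun ℓ =>
    (WellQuasiOrderedLE.finite_of_isAntichain (setOfPred_minimal_antichain _)).image _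
  refine ⟨hM.toFinset, ?_, fun p hp => ?_⟩
  · intro q hq
    obtain ⟨ℓ, a, ha, rfl⟩ := Set.mem_iUnion.mp (hM.mem_toFinset.mp hq)
    exact ha.1
  · obtain ⟨a, hap, ha⟩ :=
      (Set.isPWO_of_wellQuasiOrderedLE {a | (a, p.2) ∈ S}).exists_le_minimal hp
    exact ⟨(a, p.2), hM.mem_toFinset.mpr (Set.mem_iUnion.mpr ⟨p.2, a, ha, rfl⟩), rfl, hap⟩

theorem vsupp_add_subset (g h : Fin s → MvPowerSeries (Fin n) K) :
    vsupp (g + h) ⊆ vsupp g ∪ vsupp h := by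
  intro p hp
  by_contra hgh
  simp_all [vsupp]

theorem vsupp_sub_subset (g h : Fin s → MvPowerSeries (Fin n) K) :
    vsupp (g - h) ⊆ vsupp g ∪ vsupp h := by
  intro p hp
  by_contra hgh
  simp_all [vsupp]

theorem vsupp_monVec (α : Fin n →₀ ℕ) (ℓ : Fin s) : vsupp (monVec K α ℓ) = {(α, ℓ)} := by
  ext ⟨β, m⟩
  rcases eq_or_ne m ℓ with rfl | hm
  · simp [vsupp, monVec, coeff_monomial]
  · simp [vsupp, monVec, hm]

theorem exists_mem_vsupp_le_of_mem_vsupp_smul (a : MvPowerSeries (Fin n) K)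
    (g : Fin s → MvPowerSeries (Fin n) K) {p : (Fin n →₀ ℕ) × Fin s} (hp : p ∈ vsupp (a • g)) :
    ∃ q ∈ vsupp g, q.2 = p.2 ∧ q.1 ≤ p.1 := by
  have hp' : coeff p.1 (a * g p.2) ≠ 0 := hp
  rw [coeff_mul] at hp'
  obtain ⟨de, hde, hne⟩ := Finset.exists_ne_zero_of_sum_ne_zero hp'
  refine ⟨(de.2, p.2), right_ne_zero_of_mul hne, rfl, ?_⟩
  rw [← Finset.HasAntidiagonal.mem_antidiagonal.mp hde]
  exact le_add_self

theorem exists_isInitial (o : MonOrder n s) {g : Fin s → MvPowerSeries (Fin n) K} (hg : g ≠ 0) :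
    ∃ p, IsInitial o g p := by
  have hne : (vsupp g).Nonempty := by
    contrapose! hg
    funext ℓ
    ext d
    simpa [vsupp] using Set.eq_empty_iff_forall_notMem.mp hg (d, ℓ)
  obtain ⟨p, hp, hmin⟩ := o.wf.has_min _ hne
  refine ⟨p, hp, fun q hq hqp => ?_⟩
  rcases o.trichotomous p q with h | rfl | h
  · exact h
  · exact absurd rfl hqp
  · exact absurd h (hmin q hq)

theorem exists_le_of_mem_span_monVec {P : (Fin n →₀ ℕ) × Fin s → Prop}
    {W : Set (Fin s → MvPowerSeries (Fin n) K)} (hW : ∀ w ∈ W, ∃ q, P q ∧ w = monVec K q.1 q.2)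
    {v : Fin s → MvPowerSeries (Fin n) K} (hv : v ∈ Submodule.span (MvPowerSeries (Fin n) K) W) :
    ∀ p ∈ vsupp v, ∃ q, P q ∧ q.2 = p.2 ∧ q.1 ≤ p.1 := by
  induction hv using Submodule.span_induction with
  | mem w hw =>
    obtain ⟨q, hq, rfl⟩ := hW w hw
    intro p hp
    rw [vsupp_monVec, Set.mem_singleton_iff] at hp
    exact ⟨q, hq, by rw [hp], by rw [hp]⟩
  | zero => simp [vsupp]
  | add x y _ _ ihx ihy =>
    intro p hp
    exact (vsupp_add_subset x y hp).elim (ihx p) (ihy p)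
  | smul a x _ ih =>
    intro p hp
    obtain ⟨q, hq, hq2, hq1⟩ := exists_mem_vsupp_le_of_mem_vsupp_smul a x hp
    obtain ⟨r, hr, hr2, hr1⟩ := ih q hq
    exact ⟨r, hr, hr2.trans hq2, hr1.trans hq1⟩

theorem exists_isInitial_le_of_monVec_mem_inMod {o : MonOrder n s}
    {I : Submodule (MvPowerSeries (Fin n) K) (Fin s → MvPowerSeries (Fin n) K)}
    {p : (Fin n →₀ ℕ) × Fin s} (hp : monVec K p.1 p.2 ∈ inMod o I) :
    ∃ q, (∃ g ∈ I, g ≠ 0 ∧ IsInitial o g q) ∧ q.2 = p.2 ∧ q.1 ≤ p.1 := by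
  refine exists_le_of_mem_span_monVec ?_ hp p (by simp [vsupp_monVec])
  rintro _ ⟨g, hgI, hg0, q, hq, rfl⟩
  exact ⟨q, ⟨g, hgI, hg0, hq⟩, rfl⟩

theorem IsInitial.exists_mem_sub_monVec_lt {o : MonOrder n s}
    {I : Submodule (MvPowerSeries (Fin n) K) (Fin s → MvPowerSeries (Fin n) K)}
    {g : Fin s → MvPowerSeries (Fin n) K} {q : (Fin n →₀ ℕ) × Fin s}
    (hgI : g ∈ I) (hq : IsInitial o g q) :
    ∃ u ∈ I, ∀ p ∈ vsupp (u - monVec K q.1 q.2), o.lt q p := by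
  have hc : coeff q.1 (g q.2) ≠ 0 := hq.1
  refine ⟨(coeff q.1 (g q.2))⁻¹ • g, I.smul_of_tower_mem _ hgI, fun p hp => ?_⟩
  rcases eq_or_ne p q with rfl | hpq
  · simp [vsupp, monVec, hc] at hp
  · have hm : p ∉ vsupp (monVec K q.1 q.2) := by simpa [vsupp_monVec] using hpq
    refine hq.2 p ?_ hpq
    simp_all [vsupp]

theorem coeff_smul_monVec (a : MvPowerSeries (Fin n) K) (q b : (Fin n →₀ ℕ) × Fin s) :
    coeff b.1 ((a • monVec K q.1 q.2) b.2) =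
      if q.2 = b.2 ∧ q.1 ≤ b.1 then coeff (b.1 - q.1) a else 0 := by
  rcases eq_or_ne q.2 b.2 with h2 | h2
  · simp [monVec, h2, coeff_mul_monomial]
  · simp [monVec, Ne.symm h2, h2]

theorem coeff_smul_congr_of_lt {o : MonOrder n s} {q b : (Fin n →₀ ℕ) × Fin s}
    {R : Fin s → MvPowerSeries (Fin n) K} (hR : ∀ p ∈ vsupp R, o.lt q p)
    {a a' : MvPowerSeries (Fin n) K} (h : ∀ d, o.lt (q.1 + d, q.2) b → coeff d a = coeff d a') :
    coeff b.1 ((a • R) b.2) = coeff b.1 ((a' • R) b.2) := by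
  simp only [Pi.smul_apply, smul_eq_mul, coeff_mul]
  refine Finset.sum_congr rfl fun de hde => ?_
  by_cases hRde : coeff de.2 (R b.2) = 0
  · simp [hRde]
  have hlt := o.add_compat q (de.2, b.2) de.1 (hR _ hRde)
  rw [add_comm de.2, Finset.HasAntidiagonal.mem_antidiagonal.mp hde] at hlt
  rw [h de.1 hlt]

theorem exists_coeff_sum_smul_eq {o : MonOrder n s} (F : Finset ((Fin n →₀ ℕ) × Fin s))
    (R : (Fin n →₀ ℕ) × Fin s → Fin s → MvPowerSeries (Fin n) K)
    (hR : ∀ q ∈ F, ∀ p ∈ vsupp (R q), o.lt q p) (f : Fin s → MvPowerSeries (Fin n) K) :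
    ∃ A : (Fin n →₀ ℕ) × Fin s → MvPowerSeries (Fin n) K,
      ∀ b : (Fin n →₀ ℕ) × Fin s, (∃ q ∈ F, q.2 = b.2 ∧ q.1 ≤ b.1) →
        coeff b.1 ((∑ q ∈ F, A q • (monVec K q.1 q.2 + R q)) b.2) = coeff b.1 (f b.2) := by
  have hdvd (b : (Fin n →₀ ℕ) × Fin s) :
      ∃ q, (∃ q ∈ F, q.2 = b.2 ∧ q.1 ≤ b.1) → q ∈ F ∧ q.2 = b.2 ∧ q.1 ≤ b.1 := by
    by_cases hb : ∃ q ∈ F, q.2 = b.2 ∧ q.1 ≤ b.1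
    · exact hb.imp fun q hq _ => hq
    · exact ⟨b, hb.elim⟩
  choose π hπ using hdvd
  -- `c b` is charged to the multiplier of `π b`, at the exponent `b.1 - (π b).1`.
  let A : ((Fin n →₀ ℕ) × Fin s → K) → (Fin n →₀ ℕ) × Fin s → MvPowerSeries (Fin n) K :=
    fun c q d => if π (q.1 + d, q.2) = q then c (q.1 + d, q.2) else 0
  -- The tail `R q` moves each coefficient of `A c q` to strictly larger positions, so the
  -- coefficient of the sum at `b` involves `c` only below `b`: a well-founded recursion.
  obtain ⟨c, hc⟩ := o.wf.exists_forall_eq_of_congr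
    (fun b c => coeff b.1 (f b.2) - ∑ q ∈ F, coeff b.1 ((A c q • R q) b.2)) <| by
      intro b c c' hcc'
      refine congrArg _ (Finset.sum_congr rfl fun q hq => ?_)
      refine coeff_smul_congr_of_lt (hR q hq) fun d hd => ?_
      rw [coeff_apply, coeff_apply]
      simp only [A, hcc' _ hd]
  refine ⟨A c, fun b hb => ?_⟩
  have hdiag : ∑ q ∈ F, coeff b.1 ((A c q • monVec K q.1 q.2) b.2) = c b := by
    obtain ⟨hπF, hπ2, hπ1⟩ := hπ b hb
    calc _ = ∑ q ∈ F, if π b = q then c b else 0 := Finset.sum_congr rfl fun q _ => ?_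
      _ = c b := by rw [Finset.sum_ite_eq, if_pos hπF]
    rw [coeff_smul_monVec]
    by_cases hqb : q.2 = b.2 ∧ q.1 ≤ b.1
    · have hb' : (q.1 + (b.1 - q.1), q.2) = b := Prod.ext (add_tsub_cancel_of_le hqb.2) hqb.1
      rw [if_pos hqb, coeff_apply]
      simp only [A, hb']
    · have hπq : π b ≠ q := fun h => hqb (h ▸ ⟨hπ2, hπ1⟩)
      rw [if_neg hqb, if_neg hπq]
  calc coeff b.1 ((∑ q ∈ F, A c q • (monVec K q.1 q.2 + R q)) b.2)
      = ∑ q ∈ F, coeff b.1 ((A c q • monVec K q.1 q.2) b.2)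
          + ∑ q ∈ F, coeff b.1 ((A c q • R q) b.2) := by
        simp only [smul_add, Finset.sum_apply, Pi.add_apply, map_sum, map_add,
          Finset.sum_add_distrib]
    _ = coeff b.1 (f b.2) := by rw [hdiag, hc b, sub_add_cancel]

theorem exists_sub_mem_coMod (o : MonOrder n s)
    (I : Submodule (MvPowerSeries (Fin n) K) (Fin s → MvPowerSeries (Fin n) K))
    (f : Fin s → MvPowerSeries (Fin n) K) : ∃ g ∈ I, f - g ∈ coMod o I := by
  obtain ⟨F, hFT, hFdom⟩ :=
    exists_finset_forall_exists_le {p | ∃ g ∈ I, g ≠ 0 ∧ IsInitial o g p}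
  have hnorm : ∀ q ∈ F, ∃ u ∈ I, ∀ p ∈ vsupp (u - monVec K q.1 q.2), o.lt q p := by
    intro q hq
    obtain ⟨g, hgI, -, hg⟩ := hFT hq
    exact hg.exists_mem_sub_monVec_lt hgI
  choose! G hGI hGlt using hnorm
  obtain ⟨A, hA⟩ := exists_coeff_sum_smul_eq F (fun q => G q - monVec K q.1 q.2) hGlt f
  simp only [add_sub_cancel] at hA
  refine ⟨∑ q ∈ F, A q • G q, I.sum_mem fun q hq => I.smul_mem _ (hGI q hq), fun p hp hin => ?_⟩
  obtain ⟨q, hqT, hq2, hq1⟩ := exists_isInitial_le_of_monVec_mem_inMod hin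
  obtain ⟨r, hrF, hr2, hr1⟩ := hFdom q hqT
  apply hp
  rw [Pi.sub_apply, map_sub, hA p ⟨r, hrF, hr2.trans hq2, hr1.trans hq1⟩, sub_self]

theorem eq_of_mem_coMod_of_sub_mem {o : MonOrder n s}
    {I : Submodule (MvPowerSeries (Fin n) K) (Fin s → MvPowerSeries (Fin n) K)}
    {h h' : Fin s → MvPowerSeries (Fin n) K} (hh : h ∈ coMod o I) (hh' : h' ∈ coMod o I)
    (hI : h - h' ∈ I) : h = h' := by
  by_contra hne
  obtain ⟨p, hp⟩ := exists_isInitial o (sub_ne_zero.mpr hne)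
  have hin : monVec K p.1 p.2 ∈ inMod o I :=
    Submodule.subset_span ⟨h - h', hI, sub_ne_zero.mpr hne, p, hp, rfl⟩
  rcases vsupp_sub_subset h h' hp.1 with hph | hph'
  · exact hh p hph hin
  · exact hh' p hph' hin

theorem stmt2_general (o : MonOrder n s)
    (I : Submodule (MvPowerSeries (Fin n) K) (Fin s → MvPowerSeries (Fin n) K)) :
    ∀ f : Fin s → MvPowerSeries (Fin n) K,
      ∃ g h, g ∈ I ∧ h ∈ coMod o I ∧ f = g + h ∧
        ∀ g' h', g' ∈ I → h' ∈ coMod o I → f = g' + h' → g' = g ∧ h' = h := by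
  intro f
  obtain ⟨g, hgI, hco⟩ := exists_sub_mem_coMod o I f
  refine ⟨g, f - g, hgI, hco, (add_sub_cancel g f).symm, fun g' h' hg'I hh' hf => ?_⟩
  have hh : h' = f - g := by
    refine eq_of_mem_coMod_of_sub_mem hh' hco ?_
    have hdiff : h' - (f - g) = g - g' := by rw [hf]; abel
    exact hdiff ▸ I.sub_mem hgI hg'I
  exact ⟨by rw [eq_sub_of_add_eq hf.symm, hh, sub_sub_cancel], hh⟩

theorem stmt2 (hn : 1 ≤ n) (hs : 1 ≤ s) (o : MonOrder n s)
    (I : Submodule (MvPowerSeries (Fin n) K) (Fin s → MvPowerSeries (Fin n) K)) :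
    ∀ f : Fin s → MvPowerSeries (Fin n) K,
      ∃ g h, g ∈ I ∧ h ∈ coMod o I ∧ f = g + h ∧
        ∀ g' h', g' ∈ I → h' ∈ coMod o I → f = g' + h' → g' = g ∧ h' = h :=
  stmt2_general o I
end

section
/- Let K be a field, < a monomial order on ℕⁿ × {1,…,s}, and I a submodule of K[[x₁,…,xₙ]]^s whose initial module in(I) is an echelon: the exponent set {(α,ℓ) : x^α e_ℓ ∈ in(I)} is a finite disjoint union, over (α,ℓ) in a finite set V, of boxes {(α+β,ℓ) : β ∈ ℕⁿ with βᵢ = 0 for all i > n_{αℓ}} (a Janet basis of in(I) with scopes n_{αℓ}). For each (α,ℓ) ∈ V choose g_{αℓ} ∈ I with in(g_{αℓ}) = x^α e_ℓ. Then every f ∈ K[[x]]^s admits a unique decomposition f = Σ_{(α,ℓ)∈V} a_{αℓ}·g_{αℓ} + h where h ∈ co(I) and each a_{αℓ} is a power series depending only on the variables x₁,…,x_{n_{αℓ}}. -/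
open MvPowerSeries

variable {K : Type*} [Field K] {n s : ℕ}

/-- The box with vertex `(α,ℓ)` and scope `m`:
`{(α+β, ℓ) : β ∈ ℕⁿ, βᵢ = 0 for all i > m}`. -/
def boxAt {n s : ℕ} (p : (Fin n →₀ ℕ) × Fin s) (m : ℕ) : Set ((Fin n →₀ ℕ) × Fin s) :=
  {q | ∃ β : Fin n →₀ ℕ, (∀ i : Fin n, m ≤ (i : ℕ) → β i = 0) ∧ q = (p.1 + β, p.2)}

/-- A power series depends only on the variables `x₁,…,x_m`. -/
def DependsOnFirst (m : ℕ) (f : MvPowerSeries (Fin n) K) : Prop :=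
  ∀ β : Fin n →₀ ℕ, MvPowerSeries.coeff β f ≠ 0 → ∀ i : Fin n, m ≤ (i : ℕ) → β i = 0

/-!
Encode a pair `(a, h)` as one coefficient function `E` on `ℕⁿ × {1,…,s}`: on the box of `(α,ℓ)`
it records the coefficients of `a_{αℓ}` (shifted by `α`), off the boxes those of `h`; as the boxes
are disjoint, this identifies such functions with the pairs obeying the scope and complement
conditions. The additive map sending `E` to the coefficients of `∑ a_{αℓ} • g_{αℓ} + h` is
triangular for the monomial order: as `in(x^β g_{αℓ}) = x^{α+β} e_ℓ`, its value at `P` involves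
only values of `E` at exponents `≤ P`, and `E P` itself enters with the leading coefficient of the
`g_{αℓ}` whose box contains `P` (or with `1` if there is none). Over a well-founded index set a
triangular map with nonzero diagonal is bijective: that is existence and uniqueness at once.
-/

open Finset

namespace AddMonoidHom

variable {ι R : Type*} [DivisionRing R] {r : ι → ι → Prop}

theorem injective_of_triangular (hr : WellFounded r) (Φ : (ι → R) →+ (ι → R)) {d : ι → R}
    (hd : ∀ i, d i ≠ 0) (htri : ∀ D i, (∀ j, r j i → D j = 0) → Φ D i = D i * d i) :
    Function.Injective Φ := by
  refine (injective_iff_map_eq_zero Φ).2 fun D hD => funext fun i => ?_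
  induction i using hr.induction with
  | _ i ih =>
    have hi := htri D i ih
    rw [hD] at hi
    exact (mul_eq_zero.mp hi.symm).resolve_right (hd i)

theorem surjective_of_triangular (hr : WellFounded r) (Φ : (ι → R) →+ (ι → R)) {d : ι → R}
    (hd : ∀ i, d i ≠ 0) (htri : ∀ D i, (∀ j, r j i → D j = 0) → Φ D i = D i * d i) :
    Function.Surjective Φ := by
  classical
  intro c
  let below (E : ι → R) (i : ι) : ι → R := fun j => if r j i then E j else 0
  let E : ι → R := hr.fix fun i rec => (c i - Φ (fun j => if h : r j i then rec j h else 0) i) / d i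
  have hE (i : ι) : E i = (c i - Φ (below E i) i) / d i := hr.fix_eq _ i
  refine ⟨E, funext fun i => ?_⟩
  have hsplit : Φ E i - Φ (below E i) i = E i * d i := by
    have h := htri (E - below E i) i fun j hj => by simp [below, hj]
    simpa [below, hr.irrefl.irrefl i] using h
  rw [← sub_add_cancel (Φ E i) (Φ (below E i) i), hsplit, hE i, div_mul_cancel₀ _ (hd i)]
  abel

end AddMonoidHom

def InScope (m : ℕ) (β : Fin n →₀ ℕ) : Prop := ∀ i : Fin n, m ≤ (i : ℕ) → β i = 0

theorem IsInitial.eq_or_lt_of_coeff_ne_zero {o : MonOrder n s}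
    {g : Fin s → MvPowerSeries (Fin n) K} {p : (Fin n →₀ ℕ) × Fin s} (hp : IsInitial o g p)
    {δ : Fin n →₀ ℕ} {ℓ : Fin s} (hδ : coeff δ (g ℓ) ≠ 0) (β : Fin n →₀ ℕ) :
    (p.1 + β, p.2) = (δ + β, ℓ) ∨ o.lt (p.1 + β, p.2) (δ + β, ℓ) := by
  by_cases h : (δ, ℓ) = p
  · subst h
    exact Or.inl rfl
  · exact Or.inr (o.add_compat p (δ, ℓ) β (hp.2 (δ, ℓ) hδ h))

section Division

variable {V : Finset ((Fin n →₀ ℕ) × Fin s)} {nsc : ((Fin n →₀ ℕ) × Fin s) → ℕ}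

def boxes (V : Finset ((Fin n →₀ ℕ) × Fin s)) (nsc : ((Fin n →₀ ℕ) × Fin s) → ℕ) :
    Set ((Fin n →₀ ℕ) × Fin s) :=
  ⋃ p ∈ V, boxAt p (nsc p)

open Classical in
noncomputable def vertex (V : Finset ((Fin n →₀ ℕ) × Fin s))
    (nsc : ((Fin n →₀ ℕ) × Fin s) → ℕ) (P : (Fin n →₀ ℕ) × Fin s) : (Fin n →₀ ℕ) × Fin s :=
  if h : P ∈ boxes V nsc then (Set.mem_iUnion₂.mp h).choose else P

theorem mem_boxes {P q : (Fin n →₀ ℕ) × Fin s} (hq : q ∈ V) (hP : P ∈ boxAt q (nsc q)) :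
    P ∈ boxes V nsc :=
  Set.mem_biUnion hq hP

theorem vertex_spec {P : (Fin n →₀ ℕ) × Fin s} (hP : P ∈ boxes V nsc) :
    vertex V nsc P ∈ V ∧ P ∈ boxAt (vertex V nsc P) (nsc (vertex V nsc P)) := by
  rw [vertex, dif_pos hP]
  obtain ⟨hV, hbox⟩ := (Set.mem_iUnion₂.mp hP).choose_spec
  exact ⟨hV, hbox⟩

theorem vertex_eq (hdisj : ∀ p ∈ V, ∀ q ∈ V, p ≠ q → Disjoint (boxAt p (nsc p)) (boxAt q (nsc q)))
    {P q : (Fin n →₀ ℕ) × Fin s} (hq : q ∈ V) (hP : P ∈ boxAt q (nsc q)) :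
    vertex V nsc P = q := by
  obtain ⟨hvV, hvbox⟩ := vertex_spec (mem_boxes hq hP)
  by_contra hne
  exact Set.disjoint_left.mp (hdisj _ hvV _ hq hne) hvbox hP

theorem mem_coMod_iff {o : MonOrder n s}
    {I : Submodule (MvPowerSeries (Fin n) K) (Fin s → MvPowerSeries (Fin n) K)}
    (hech : {q | monVec K q.1 q.2 ∈ inMod o I} = boxes V nsc)
    {h : Fin s → MvPowerSeries (Fin n) K} :
    h ∈ coMod o I ↔ ∀ P ∈ vsupp h, P ∉ boxes V nsc := by
  simp only [coMod, ← hech, Set.mem_ofPred_eq]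

open Classical in
noncomputable def divQuot (nsc : ((Fin n →₀ ℕ) × Fin s) → ℕ) (E : ((Fin n →₀ ℕ) × Fin s) → K)
    (q : (Fin n →₀ ℕ) × Fin s) : MvPowerSeries (Fin n) K :=
  fun β => if InScope (nsc q) β then E (q.1 + β, q.2) else 0

open Classical in
noncomputable def divRem (V : Finset ((Fin n →₀ ℕ) × Fin s)) (nsc : ((Fin n →₀ ℕ) × Fin s) → ℕ)
    (E : ((Fin n →₀ ℕ) × Fin s) → K) : Fin s → MvPowerSeries (Fin n) K :=
  fun ℓ β => if (β, ℓ) ∈ boxes V nsc then 0 else E (β, ℓ)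

open Classical in
noncomputable def divCoeffs (V : Finset ((Fin n →₀ ℕ) × Fin s))
    (nsc : ((Fin n →₀ ℕ) × Fin s) → ℕ) (a : ((Fin n →₀ ℕ) × Fin s) → MvPowerSeries (Fin n) K)
    (h : Fin s → MvPowerSeries (Fin n) K) (P : (Fin n →₀ ℕ) × Fin s) : K :=
  if P ∈ boxes V nsc then coeff (P.1 - (vertex V nsc P).1) (a (vertex V nsc P))
  else coeff P.1 (h P.2)

open Classical in
theorem coeff_divQuot (E : ((Fin n →₀ ℕ) × Fin s) → K) (q : (Fin n →₀ ℕ) × Fin s)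
    (β : Fin n →₀ ℕ) :
    coeff β (divQuot nsc E q) = if InScope (nsc q) β then E (q.1 + β, q.2) else 0 :=
  rfl

open Classical in
theorem coeff_divRem (E : ((Fin n →₀ ℕ) × Fin s) → K) (P : (Fin n →₀ ℕ) × Fin s) :
    coeff P.1 (divRem V nsc E P.2) = if P ∈ boxes V nsc then 0 else E P :=
  rfl

theorem dependsOnFirst_divQuot (E : ((Fin n →₀ ℕ) × Fin s) → K) (q : (Fin n →₀ ℕ) × Fin s) :
    DependsOnFirst (nsc q) (divQuot nsc E q) := by
  intro β hβ
  by_contra hout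
  exact hβ (by rw [coeff_divQuot, if_neg (show ¬InScope (nsc q) β from hout)])

theorem divQuot_divCoeffs
    (hdisj : ∀ p ∈ V, ∀ q ∈ V, p ≠ q → Disjoint (boxAt p (nsc p)) (boxAt q (nsc q)))
    {a : ((Fin n →₀ ℕ) × Fin s) → MvPowerSeries (Fin n) K} {h : Fin s → MvPowerSeries (Fin n) K}
    {q : (Fin n →₀ ℕ) × Fin s} (hq : q ∈ V) (ha : DependsOnFirst (nsc q) (a q)) :
    divQuot nsc (divCoeffs V nsc a h) q = a q := by
  ext β
  rw [coeff_divQuot]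
  by_cases hβ : InScope (nsc q) β
  · have hbox : (q.1 + β, q.2) ∈ boxAt q (nsc q) := ⟨β, hβ, rfl⟩
    rw [if_pos hβ, divCoeffs, if_pos (mem_boxes hq hbox), vertex_eq hdisj hq hbox,
      add_tsub_cancel_left]
  · rw [if_neg hβ]
    by_contra hne
    exact hβ (ha β (Ne.symm hne))

theorem divRem_divCoeffs {a : ((Fin n →₀ ℕ) × Fin s) → MvPowerSeries (Fin n) K}
    {h : Fin s → MvPowerSeries (Fin n) K} (hh : ∀ P ∈ vsupp h, P ∉ boxes V nsc) :
    divRem V nsc (divCoeffs V nsc a h) = h := by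
  funext ℓ
  ext β
  refine (coeff_divRem _ (β, ℓ)).trans ?_
  by_cases hβ : (β, ℓ) ∈ boxes V nsc
  · rw [if_pos hβ]
    by_contra hne
    exact hh (β, ℓ) (Ne.symm hne) hβ
  · rw [if_neg hβ, divCoeffs, if_neg hβ]

variable {o : MonOrder n s} {g : ((Fin n →₀ ℕ) × Fin s) → (Fin s → MvPowerSeries (Fin n) K)}

open Classical in
noncomputable def pivot (V : Finset ((Fin n →₀ ℕ) × Fin s)) (nsc : ((Fin n →₀ ℕ) × Fin s) → ℕ)
    (g : ((Fin n →₀ ℕ) × Fin s) → (Fin s → MvPowerSeries (Fin n) K))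
    (P : (Fin n →₀ ℕ) × Fin s) : K :=
  if P ∈ boxes V nsc then coeff (vertex V nsc P).1 (g (vertex V nsc P) (vertex V nsc P).2) else 1

theorem pivot_ne_zero (hgin : ∀ p ∈ V, IsInitial o (g p) p) (P : (Fin n →₀ ℕ) × Fin s) :
    pivot V nsc g P ≠ 0 := by
  unfold pivot
  split_ifs with hP
  · exact (hgin _ (vertex_spec hP).1).1
  · exact one_ne_zero

theorem divQuot_zero (q : (Fin n →₀ ℕ) × Fin s) :
    divQuot nsc (0 : ((Fin n →₀ ℕ) × Fin s) → K) q = 0 := by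
  ext β
  simp [coeff_divQuot]

theorem divQuot_add (E E' : ((Fin n →₀ ℕ) × Fin s) → K) (q : (Fin n →₀ ℕ) × Fin s) :
    divQuot nsc (E + E') q = divQuot nsc E q + divQuot nsc E' q := by
  ext β
  simp only [coeff_divQuot, map_add, Pi.add_apply]
  split_ifs <;> simp

theorem divRem_zero : divRem V nsc (0 : ((Fin n →₀ ℕ) × Fin s) → K) = 0 := by
  funext ℓ
  ext β
  exact (coeff_divRem _ (β, ℓ)).trans (by simp)

theorem divRem_add (E E' : ((Fin n →₀ ℕ) × Fin s) → K) :
    divRem V nsc (E + E') = divRem V nsc E + divRem V nsc E' := by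
  funext ℓ
  ext β
  simp only [Pi.add_apply, map_add, coeff_divRem (P := (β, ℓ))]
  split_ifs <;> simp

noncomputable def divMap (V : Finset ((Fin n →₀ ℕ) × Fin s)) (nsc : ((Fin n →₀ ℕ) × Fin s) → ℕ)
    (g : ((Fin n →₀ ℕ) × Fin s) → (Fin s → MvPowerSeries (Fin n) K)) :
    (((Fin n →₀ ℕ) × Fin s) → K) →+ (((Fin n →₀ ℕ) × Fin s) → K) where
  toFun E P := coeff P.1 ((∑ q ∈ V, divQuot nsc E q • g q + divRem V nsc E) P.2)
  map_zero' := by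
    funext P
    simp only [divQuot_zero, divRem_zero, zero_smul, sum_const_zero, add_zero, Pi.zero_apply,
      map_zero]
  map_add' E E' := by
    funext P
    simp only [divQuot_add, divRem_add, add_smul, sum_add_distrib, Pi.add_apply, map_add]
    abel

theorem divMap_apply (E : ((Fin n →₀ ℕ) × Fin s) → K) (P : (Fin n →₀ ℕ) × Fin s) :
    divMap V nsc g E P = coeff P.1 ((∑ q ∈ V, divQuot nsc E q • g q + divRem V nsc E) P.2) :=
  rfl

theorem divMap_divCoeffs
    (hdisj : ∀ p ∈ V, ∀ q ∈ V, p ≠ q → Disjoint (boxAt p (nsc p)) (boxAt q (nsc q)))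
    {a : ((Fin n →₀ ℕ) × Fin s) → MvPowerSeries (Fin n) K} {h : Fin s → MvPowerSeries (Fin n) K}
    (ha : ∀ p ∈ V, DependsOnFirst (nsc p) (a p)) (hh : ∀ P ∈ vsupp h, P ∉ boxes V nsc) :
    divMap V nsc g (divCoeffs V nsc a h) = fun P => coeff P.1 ((∑ q ∈ V, a q • g q + h) P.2) := by
  funext P
  rw [divMap_apply, divRem_divCoeffs hh,
    sum_congr rfl fun q hq => by rw [divQuot_divCoeffs hdisj hq (ha q hq)]]

section Triangularity

variable {D : ((Fin n →₀ ℕ) × Fin s) → K} {P q : (Fin n →₀ ℕ) × Fin s}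

theorem eq_of_coeff_divQuot_mul_coeff_ne_zero (hq : IsInitial o (g q) q)
    (hD : ∀ Q, o.lt Q P → D Q = 0) {bd : (Fin n →₀ ℕ) × (Fin n →₀ ℕ)} (hbd : bd ∈ antidiagonal P.1)
    (hne : coeff bd.1 (divQuot nsc D q) * coeff bd.2 (g q P.2) ≠ 0) :
    InScope (nsc q) bd.1 ∧ bd.2 = q.1 ∧ P = (q.1 + bd.1, q.2) := by
  obtain ⟨hquot, hg⟩ := mul_ne_zero_iff.mp hne
  rw [coeff_divQuot] at hquot
  by_cases hsc : InScope (nsc q) bd.1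
  swap
  · exact absurd (if_neg hsc) hquot
  rw [if_pos hsc] at hquot
  have hP : (bd.2 + bd.1, P.2) = P := by rw [add_comm, mem_antidiagonal.mp hbd]
  rcases hq.eq_or_lt_of_coeff_ne_zero hg bd.1 with heq | hlt
  · refine ⟨hsc, (add_right_cancel (congrArg Prod.fst heq)).symm, ?_⟩
    rw [heq, hP]
  · rw [hP] at hlt
    exact absurd (hD _ hlt) hquot

open Classical in
theorem coeff_divQuot_mul (hq : IsInitial o (g q) q) (hD : ∀ Q, o.lt Q P → D Q = 0) :
    coeff P.1 (divQuot nsc D q * g q P.2)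
      = if P ∈ boxAt q (nsc q) then D P * coeff q.1 (g q q.2) else 0 := by
  rw [coeff_mul]
  split_ifs with hbox
  · obtain ⟨β, hβ, rfl⟩ := hbox
    refine (sum_eq_single_of_mem (β, q.1) (by simp [add_comm]) fun bd hbd hne => ?_).trans ?_
    · by_contra hterm
      obtain ⟨-, hbd2, hP⟩ := eq_of_coeff_divQuot_mul_coeff_ne_zero hq hD hbd hterm
      have hbd1 : bd.1 = β := (add_left_cancel (congrArg Prod.fst hP)).symm
      exact hne (Prod.ext hbd1 hbd2)
    · rw [coeff_divQuot, if_pos (show InScope (nsc q) β from hβ)]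
  · refine sum_eq_zero fun bd hbd => ?_
    by_contra hterm
    obtain ⟨hsc, -, hP⟩ := eq_of_coeff_divQuot_mul_coeff_ne_zero hq hD hbd hterm
    exact hbox ⟨bd.1, hsc, hP⟩

theorem divMap_apply_of_forall_lt_eq_zero
    (hdisj : ∀ p ∈ V, ∀ q ∈ V, p ≠ q → Disjoint (boxAt p (nsc p)) (boxAt q (nsc q)))
    (hgin : ∀ p ∈ V, IsInitial o (g p) p) (hD : ∀ Q, o.lt Q P → D Q = 0) :
    divMap V nsc g D P = D P * pivot V nsc g P := by
  simp only [divMap_apply, Pi.add_apply, Finset.sum_apply, Pi.smul_apply, smul_eq_mul, map_add,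
    map_sum]
  rw [sum_congr rfl fun q hq => coeff_divQuot_mul (hgin q hq) hD, coeff_divRem, pivot]
  by_cases hP : P ∈ boxes V nsc
  · obtain ⟨hvV, hvbox⟩ := vertex_spec hP
    rw [sum_eq_single_of_mem _ hvV
        fun q hq hne => if_neg fun hb => hne (vertex_eq hdisj hq hb).symm,
      if_pos hvbox, if_pos hP, if_pos hP, add_zero]
  · rw [sum_eq_zero fun q hq => if_neg fun hb => hP (mem_boxes hq hb), if_neg hP, if_neg hP,
      zero_add, mul_one]

end Triangularity

end Division

theorem division_echelon_powerseries_general (o : MonOrder n s)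
    (I : Submodule (MvPowerSeries (Fin n) K) (Fin s → MvPowerSeries (Fin n) K))
    (V : Finset ((Fin n →₀ ℕ) × Fin s)) (nsc : ((Fin n →₀ ℕ) × Fin s) → ℕ)
    (hdisj : ∀ p ∈ V, ∀ q ∈ V, p ≠ q → Disjoint (boxAt p (nsc p)) (boxAt q (nsc q)))
    (hech : {q | monVec K q.1 q.2 ∈ inMod o I} = ⋃ p ∈ V, boxAt p (nsc p))
    (g : ((Fin n →₀ ℕ) × Fin s) → (Fin s → MvPowerSeries (Fin n) K))
    (hgin : ∀ p ∈ V, IsInitial o (g p) p) :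
    ∀ f : Fin s → MvPowerSeries (Fin n) K,
      ∃ (a : ((Fin n →₀ ℕ) × Fin s) → MvPowerSeries (Fin n) K)
        (h : Fin s → MvPowerSeries (Fin n) K),
        (∀ p ∈ V, DependsOnFirst (nsc p) (a p)) ∧ h ∈ coMod o I ∧
        f = (∑ p ∈ V, a p • g p) + h ∧
        ∀ (a' : ((Fin n →₀ ℕ) × Fin s) → MvPowerSeries (Fin n) K)
          (h' : Fin s → MvPowerSeries (Fin n) K),
          (∀ p ∈ V, DependsOnFirst (nsc p) (a' p)) → h' ∈ coMod o I →
          f = (∑ p ∈ V, a' p • g p) + h' →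
          (∀ p ∈ V, a' p = a p) ∧ h' = h := by
  intro f
  have htri := fun D P => divMap_apply_of_forall_lt_eq_zero (D := D) (P := P) hdisj hgin
  have hpivot := pivot_ne_zero (nsc := nsc) hgin
  obtain ⟨E, hE⟩ := (divMap V nsc g).surjective_of_triangular o.wf hpivot htri
    fun P => coeff P.1 (f P.2)
  refine ⟨divQuot nsc E, divRem V nsc E, fun p _ => dependsOnFirst_divQuot E p,
    (mem_coMod_iff hech).2 fun P hP hbox => hP (by rw [coeff_divRem, if_pos hbox]), ?_, ?_⟩
  · funext ℓ
    ext β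
    exact (congrFun hE (β, ℓ)).symm
  · intro a' h' ha' hh' hf'
    have hrem' := (mem_coMod_iff hech).1 hh'
    have hE' : divCoeffs V nsc a' h' = E := (divMap V nsc g).injective_of_triangular o.wf hpivot
      htri (by rw [hE, divMap_divCoeffs hdisj ha' hrem', ← hf'])
    refine ⟨fun p hp => ?_, ?_⟩
    · rw [← hE', divQuot_divCoeffs hdisj hp (ha' p hp)]
    · rw [← hE', divRem_divCoeffs hrem']

/-- Division theorem for echelon modules (Theorem 4.2). -/
theorem division_echelon_powerseries (hn : 1 ≤ n) (hs : 1 ≤ s) (o : MonOrder n s)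
    (I : Submodule (MvPowerSeries (Fin n) K) (Fin s → MvPowerSeries (Fin n) K))
    (V : Finset ((Fin n →₀ ℕ) × Fin s)) (nsc : ((Fin n →₀ ℕ) × Fin s) → ℕ)
    (hscope : ∀ p ∈ V, nsc p ≤ n)
    (hdisj : ∀ p ∈ V, ∀ q ∈ V, p ≠ q → Disjoint (boxAt p (nsc p)) (boxAt q (nsc q)))
    (hech : {q | monVec K q.1 q.2 ∈ inMod o I} = ⋃ p ∈ V, boxAt p (nsc p))
    (g : ((Fin n →₀ ℕ) × Fin s) → (Fin s → MvPowerSeries (Fin n) K))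
    (hgI : ∀ p ∈ V, g p ∈ I) (hgin : ∀ p ∈ V, IsInitial o (g p) p) :
    ∀ f : Fin s → MvPowerSeries (Fin n) K,
      ∃ (a : ((Fin n →₀ ℕ) × Fin s) → MvPowerSeries (Fin n) K)
        (h : Fin s → MvPowerSeries (Fin n) K),
        (∀ p ∈ V, DependsOnFirst (nsc p) (a p)) ∧ h ∈ coMod o I ∧
        f = (∑ p ∈ V, a p • g p) + h ∧
        ∀ (a' : ((Fin n →₀ ℕ) × Fin s) → MvPowerSeries (Fin n) K)
          (h' : Fin s → MvPowerSeries (Fin n) K),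
          (∀ p ∈ V, DependsOnFirst (nsc p) (a' p)) → h' ∈ coMod o I →
          f = (∑ p ∈ V, a' p • g p) + h' →
          (∀ p ∈ V, a' p = a p) ∧ h' = h :=
  division_echelon_powerseries_general o I V nsc hdisj hech g hgin
end

section
/- Let K be a field, < a monomial order on ℕⁿ × {1,…,s}, and I a submodule of the polynomial module K[x₁,…,xₙ]^s. For nonzero F ∈ K[x]^s let lm(F) = x^α e_ℓ where (α,ℓ) is the <-maximum of supp(F); let lm(I) be the submodule generated by the lm(F) for nonzero F ∈ I, and let co(I) be the K-subspace of polynomial vectors whose support contains no (α,ℓ) with x^α e_ℓ ∈ lm(I). Then K[x]^s = I ⊕ co(I): every F ∈ K[x]^s is uniquely F = G + C with G ∈ I and C ∈ co(I). -/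
variable {K : Type*} [Field K] {n s : ℕ}

/-- Support of a polynomial vector. -/
def pvsupp (F : Fin s → MvPolynomial (Fin n) K) : Set ((Fin n →₀ ℕ) × Fin s) :=
  {p | MvPolynomial.coeff p.1 (F p.2) ≠ 0}

/-- The monomial vector `x^α · e_ℓ` in `K[x]^s`. -/
noncomputable def pMonVec (K : Type*) [Field K] {n s : ℕ} (α : Fin n →₀ ℕ) (ℓ : Fin s) :
    Fin s → MvPolynomial (Fin n) K :=
  Pi.single ℓ (MvPolynomial.monomial α 1)

/-- `(α,ℓ)` is the exponent of the leading monomial vector of `F` (the `<`-maximum of the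
support). -/
def IsLeading (o : MonOrder n s) (F : Fin s → MvPolynomial (Fin n) K)
    (p : (Fin n →₀ ℕ) × Fin s) : Prop :=
  p ∈ pvsupp F ∧ ∀ q ∈ pvsupp F, q ≠ p → o.lt q p

/-- The leading module of a submodule `I` of `K[x]^s`. -/
noncomputable def lmMod (o : MonOrder n s)
    (I : Submodule (MvPolynomial (Fin n) K) (Fin s → MvPolynomial (Fin n) K)) :
    Submodule (MvPolynomial (Fin n) K) (Fin s → MvPolynomial (Fin n) K) :=
  Submodule.span _ {v | ∃ F ∈ I, F ≠ 0 ∧ ∃ p, IsLeading o F p ∧ v = pMonVec K p.1 p.2}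

/-- The canonical direct monomial complement of `lm(I)` in `K[x]^s`. -/
def pCoMod (o : MonOrder n s)
    (I : Submodule (MvPolynomial (Fin n) K) (Fin s → MvPolynomial (Fin n) K)) :
    Set (Fin s → MvPolynomial (Fin n) K) :=
  {C | ∀ p ∈ pvsupp C, pMonVec K p.1 p.2 ∉ lmMod o I}

/-!
Division algorithm, by well-founded induction on the leading exponent `p = (α, ℓ)` of `F`.
If `x^α e_ℓ ∈ lm(I)`, then looking at the `ℓ`-th coordinate puts `x^α` in a monomial ideal, so
`x^α` is divisible by `x^β` for some `H ∈ I` with leading exponent `(β, ℓ)`, and subtracting a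
monomial multiple of `H` kills the leading term of `F`; otherwise that term is moved into the
remainder, which stays in `co(I)`. Uniqueness: a nonzero element of `I ∩ co(I)` would have its
leading monomial both in and outside `lm(I)`.
-/

open MvPolynomial

namespace MonOrder

variable (o : MonOrder n s)

lemma isStrictOrder_swap : IsStrictOrder _ (Function.swap o.lt) where
  irrefl := o.wf.irrefl.irrefl
  trans _ _ _ hab hbc := o.trans _ _ _ hbc hab

lemma exists_max_of_finite {S : Set ((Fin n →₀ ℕ) × Fin s)} (hS : S.Finite) (hne : S.Nonempty) :
    ∃ p ∈ S, ∀ q ∈ S, q ≠ p → o.lt q p := by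
  have := o.isStrictOrder_swap
  obtain ⟨⟨p, hp⟩, -, hmax⟩ := (hS.wellFoundedOn (r := Function.swap o.lt)).has_min Set.univ
    ⟨⟨_, hne.some_mem⟩, trivial⟩
  refine ⟨p, hp, fun q hq hqp => ?_⟩
  rcases o.trichotomous q p with h | h | h
  · exact h
  · exact absurd h hqp
  · exact absurd h (hmax ⟨q, hq⟩ trivial)

end MonOrder

section Support

variable {F G H : Fin s → MvPolynomial (Fin n) K}

lemma mem_pvsupp {p : (Fin n →₀ ℕ) × Fin s} : p ∈ pvsupp F ↔ coeff p.1 (F p.2) ≠ 0 := Iff.rfl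

lemma pvsupp_finite (F : Fin s → MvPolynomial (Fin n) K) : (pvsupp F).Finite := by
  refine (Set.finite_iUnion fun ℓ => (F ℓ).support.finite_toSet.image fun α => (α, ℓ)).subset ?_
  rintro ⟨α, ℓ⟩ h
  exact Set.mem_iUnion.2 ⟨ℓ, α, mem_support_iff.2 h, rfl⟩

lemma pvsupp_nonempty (hF : F ≠ 0) : (pvsupp F).Nonempty := by
  contrapose! hF
  ext ℓ α
  by_contra h
  exact hF.subset (show (α, ℓ) ∈ pvsupp F from h)

lemma pvsupp_add_subset : pvsupp (F + G) ⊆ pvsupp F ∪ pvsupp G := by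
  intro p hp
  by_contra h
  simp only [Set.mem_union, mem_pvsupp, not_or, not_not] at h
  exact hp (by simp [h.1, h.2])

lemma pvsupp_sub_subset : pvsupp (F - G) ⊆ pvsupp F ∪ pvsupp G := by
  intro p hp
  by_contra h
  simp only [Set.mem_union, mem_pvsupp, not_or, not_not] at h
  exact hp (by simp [h.1, h.2])

lemma mem_pvsupp_single_monomial {α : Fin n →₀ ℕ} {ℓ : Fin s} {c : K} (hc : c ≠ 0)
    {q : (Fin n →₀ ℕ) × Fin s} : q ∈ pvsupp (Pi.single ℓ (monomial α c)) ↔ q = (α, ℓ) := by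
  obtain ⟨β, m⟩ := q
  by_cases hm : m = ℓ
  · subst hm
    simp [mem_pvsupp, coeff_monomial, hc, eq_comm]
  · simp [mem_pvsupp, hm]

lemma mem_pvsupp_monomial_smul {γ : Fin n →₀ ℕ} {a : K} (ha : a ≠ 0)
    {q : (Fin n →₀ ℕ) × Fin s} :
    q ∈ pvsupp (monomial γ a • H) ↔ γ ≤ q.1 ∧ (q.1 - γ, q.2) ∈ pvsupp H := by
  simp [mem_pvsupp, coeff_monomial_mul', ha]

end Support

section Leading

variable {o : MonOrder n s} {F H R : Fin s → MvPolynomial (Fin n) K}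
  {p : (Fin n →₀ ℕ) × Fin s}

lemma exists_isLeading (o : MonOrder n s) (hF : F ≠ 0) : ∃ p, IsLeading o F p :=
  o.exists_max_of_finite (pvsupp_finite F) (pvsupp_nonempty hF)

lemma isLeading_single_monomial {α : Fin n →₀ ℕ} {ℓ : Fin s} {c : K} (hc : c ≠ 0) :
    IsLeading o (Pi.single ℓ (monomial α c)) (α, ℓ) :=
  ⟨(mem_pvsupp_single_monomial hc).2 rfl,
    fun _ hq hne => absurd ((mem_pvsupp_single_monomial hc).1 hq) hne⟩

lemma IsLeading.monomial_smul {β γ : Fin n →₀ ℕ} {ℓ : Fin s} {a : K} (hH : IsLeading o H (β, ℓ))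
    (ha : a ≠ 0) : IsLeading o (monomial γ a • H) (β + γ, ℓ) := by
  refine ⟨(mem_pvsupp_monomial_smul ha).2 ⟨le_add_self, by simpa using hH.1⟩, ?_⟩
  rintro ⟨δ, m⟩ hq hne
  obtain ⟨hγ, hq⟩ := (mem_pvsupp_monomial_smul ha).1 hq
  have hne' : (δ - γ, m) ≠ (β, ℓ) := by
    rintro ⟨⟩
    exact hne (by simp [tsub_add_cancel_of_le hγ])
  simpa [tsub_add_cancel_of_le hγ] using o.add_compat _ _ γ (hH.2 _ hq hne')

lemma IsLeading.lt_of_mem_pvsupp_sub (hF : IsLeading o F p) (hR : IsLeading o R p)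
    (hc : coeff p.1 (R p.2) = coeff p.1 (F p.2)) {q : (Fin n →₀ ℕ) × Fin s}
    (hq : q ∈ pvsupp (F - R)) : o.lt q p := by
  have hqp : q ≠ p := by
    rintro rfl
    exact hq (by simp [hc])
  rcases pvsupp_sub_subset hq with hqF | hqR
  · exact hF.2 q hqF hqp
  · exact hR.2 q hqR hqp

end Leading

section Division

variable {o : MonOrder n s}
  {I : Submodule (MvPolynomial (Fin n) K) (Fin s → MvPolynomial (Fin n) K)}
  {F G C G' C' : Fin s → MvPolynomial (Fin n) K}

/-- The `ℓ`-th coordinates of `lm(I)` lie in the monomial ideal spanned by the leading monomials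
in position `ℓ`, whose membership criterion is divisibility. -/
lemma exists_isLeading_le_of_pMonVec_mem_lmMod {α : Fin n →₀ ℕ} {ℓ : Fin s}
    (h : pMonVec K α ℓ ∈ lmMod o I) : ∃ H ∈ I, ∃ β ≤ α, IsLeading o H (β, ℓ) := by
  set B := {β | ∃ H ∈ I, IsLeading o H (β, ℓ)}
  have hproj : lmMod o I ≤
      Submodule.comap (LinearMap.proj ℓ) (Ideal.span ((fun β => monomial β (1 : K)) '' B)) := by
    rw [lmMod, Submodule.span_le]
    rintro _ ⟨H, hH, -, ⟨β, m⟩, hlead, rfl⟩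
    by_cases hm : m = ℓ
    · subst hm
      exact Ideal.subset_span ⟨β, ⟨H, hH, hlead⟩, by simp [pMonVec]⟩
    · simp [pMonVec, Pi.single_eq_of_ne' hm]
  have hα := mem_ideal_span_monomial_image.1 (by simpa [pMonVec] using hproj h) α
  obtain ⟨β, ⟨H, hH, hlead⟩, hβ⟩ := hα (by simp)
  exact ⟨H, hH, β, hβ, hlead⟩

lemma zero_mem_pCoMod : (0 : Fin s → MvPolynomial (Fin n) K) ∈ pCoMod o I :=
  fun _ hp => absurd rfl hp

lemma add_mem_pCoMod (hC : C ∈ pCoMod o I) (hC' : C' ∈ pCoMod o I) : C + C' ∈ pCoMod o I :=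
  fun p hp => (pvsupp_add_subset hp).elim (hC p) (hC' p)

lemma sub_mem_pCoMod (hC : C ∈ pCoMod o I) (hC' : C' ∈ pCoMod o I) : C - C' ∈ pCoMod o I :=
  fun p hp => (pvsupp_sub_subset hp).elim (hC p) (hC' p)

lemma eq_zero_of_mem_of_mem_pCoMod (hI : F ∈ I) (hC : F ∈ pCoMod o I) : F = 0 := by
  by_contra hF
  obtain ⟨p, hp⟩ := exists_isLeading o hF
  exact hC p hp.1 (Submodule.subset_span ⟨F, hI, hF, p, hp, rfl⟩)

lemma IsLeading.exists_reducer {p : (Fin n →₀ ℕ) × Fin s} (hF : IsLeading o F p) :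
    ∃ R, (R ∈ I ∨ R ∈ pCoMod o I) ∧ IsLeading o R p ∧
      coeff p.1 (R p.2) = coeff p.1 (F p.2) := by
  obtain ⟨α, ℓ⟩ := p
  have hc : coeff α (F ℓ) ≠ 0 := hF.1
  by_cases hm : pMonVec K α ℓ ∈ lmMod o I
  · obtain ⟨H, hH, β, hβ, hlead⟩ := exists_isLeading_le_of_pMonVec_mem_lmMod hm
    have hd : coeff β (H ℓ) ≠ 0 := hlead.1
    have hαβ : β + (α - β) = α := add_tsub_cancel_of_le hβ
    refine ⟨monomial (α - β) (coeff α (F ℓ) / coeff β (H ℓ)) • H, .inl (I.smul_mem _ hH), ?_, ?_⟩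
    · simpa [hαβ] using hlead.monomial_smul (γ := α - β) (div_ne_zero hc hd)
    · simp [coeff_monomial_mul', tsub_tsub_cancel_of_le hβ, hd]
  · refine ⟨Pi.single ℓ (monomial α (coeff α (F ℓ))), .inr ?_, isLeading_single_monomial hc, ?_⟩
    · intro q hq
      rw [(mem_pvsupp_single_monomial hc).1 hq]
      exact hm
    · simp

lemma exists_eq_add_of_isLeading (I) {p : (Fin n →₀ ℕ) × Fin s} (hF : IsLeading o F p) :
    ∃ G ∈ I, ∃ C ∈ pCoMod o I, F = G + C := by
  induction p using o.wf.induction generalizing F with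
  | _ p ih =>
  obtain ⟨R, hR, hRlead, hRc⟩ := hF.exists_reducer (I := I)
  obtain ⟨G, hG, C, hC, hFR⟩ : ∃ G ∈ I, ∃ C ∈ pCoMod o I, F - R = G + C := by
    by_cases h0 : F - R = 0
    · exact ⟨0, I.zero_mem, 0, zero_mem_pCoMod, by simp [h0]⟩
    · obtain ⟨q, hq⟩ := exists_isLeading o h0
      exact ih q (hF.lt_of_mem_pvsupp_sub hRlead hRc hq.1) hq
  rcases hR with hR | hR
  · exact ⟨R + G, I.add_mem hR hG, C, hC, by rw [add_assoc, ← hFR]; abel⟩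
  · exact ⟨G, hG, C + R, add_mem_pCoMod hC hR, by rw [← add_assoc, ← hFR]; abel⟩

lemma exists_eq_add_mem_pCoMod (o : MonOrder n s) (I) (F : Fin s → MvPolynomial (Fin n) K) :
    ∃ G ∈ I, ∃ C ∈ pCoMod o I, F = G + C := by
  by_cases hF : F = 0
  · exact ⟨0, I.zero_mem, 0, zero_mem_pCoMod, by simp [hF]⟩
  · obtain ⟨p, hp⟩ := exists_isLeading o hF
    exact exists_eq_add_of_isLeading I hp

lemma eq_and_eq_of_add_eq_add (hG : G ∈ I) (hC : C ∈ pCoMod o I) (hG' : G' ∈ I)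
    (hC' : C' ∈ pCoMod o I) (h : G + C = G' + C') : G = G' ∧ C = C' := by
  have hdiff : C - C' = G' - G := by
    rw [sub_eq_sub_iff_add_eq_add, add_comm C, h, add_comm]
  obtain rfl : C = C' :=
    sub_eq_zero.1 (eq_zero_of_mem_of_mem_pCoMod (hdiff ▸ I.sub_mem hG' hG) (sub_mem_pCoMod hC hC'))
  exact ⟨add_right_cancel h, rfl⟩

end Division

theorem polynomial_division_general (o : MonOrder n s)
    (I : Submodule (MvPolynomial (Fin n) K) (Fin s → MvPolynomial (Fin n) K)) :
    ∀ F : Fin s → MvPolynomial (Fin n) K,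
      ∃ G C, G ∈ I ∧ C ∈ pCoMod o I ∧ F = G + C ∧
        ∀ G' C', G' ∈ I → C' ∈ pCoMod o I → F = G' + C' → G' = G ∧ C' = C := by
  intro F
  obtain ⟨G, hG, C, hC, rfl⟩ := exists_eq_add_mem_pCoMod o I F
  exact ⟨G, C, hG, hC, rfl, fun G' C' hG' hC' h => eq_and_eq_of_add_eq_add hG' hC' hG hC h.symm⟩

/-- Polynomial division theorem: `K[x]^s = I ⊕ co(I)` (Theorem 4.3). -/
theorem polynomial_division (hn : 1 ≤ n) (hs : 1 ≤ s) (o : MonOrder n s)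
    (I : Submodule (MvPolynomial (Fin n) K) (Fin s → MvPolynomial (Fin n) K)) :
    ∀ F : Fin s → MvPolynomial (Fin n) K,
      ∃ G C, G ∈ I ∧ C ∈ pCoMod o I ∧ F = G + C ∧
        ∀ G' C', G' ∈ I → C' ∈ pCoMod o I → F = G' + C' → G' = G ∧ C' = C :=
  polynomial_division_general o I
end

section
/- (Formal implicit function theorem.) Let K be a field and H = (H₁,…,H_p) a vector of polynomials in K[x₁,…,xₙ,y₁,…,y_p] with H(0,0) = 0 and Jacobian matrix (∂H_i/∂y_j)(0,0) invertible over K. Then there exists a unique vector h = (h₁,…,h_p) of formal power series in K[[x₁,…,xₙ]] with hᵢ(0) = 0 for all i and H_i(x, h₁(x),…,h_p(x)) = 0 for all i. -/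
variable {K : Type*} [Field K] {n p : ℕ}

/-- Substitution of the power series vector `h` for the `y`-variables (and `xⱼ` for itself)
in a polynomial `H ∈ K[x,y]`, yielding a power series in `K[[x]]`. -/
noncomputable def substY (H : MvPolynomial (Fin n ⊕ Fin p) K)
    (h : Fin p → MvPowerSeries (Fin n) K) : MvPowerSeries (Fin n) K :=
  MvPolynomial.aeval (Sum.elim (fun j => MvPowerSeries.X j) h) H

/-- A mother code: a vector `H = (H₁,…,H_p)` of polynomials in `K[x,y]` with `H(0,0) = 0`
whose Jacobian matrix `(∂H_i/∂y_j)` is invertible at the origin. -/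
def IsMotherCode (H : Fin p → MvPolynomial (Fin n ⊕ Fin p) K) : Prop :=
  (∀ i, MvPolynomial.eval (0 : Fin n ⊕ Fin p → K) (H i) = 0) ∧
  IsUnit (Matrix.of fun i j : Fin p =>
    MvPolynomial.eval (0 : Fin n ⊕ Fin p → K) (MvPolynomial.pderiv (Sum.inr j) (H i)))

/-- A formal power series is algebraic if it satisfies a nontrivial polynomial relation
over `K[x₁,…,xₙ]`. -/
def IsAlgPS {n : ℕ} (f : MvPowerSeries (Fin n) K) : Prop :=
  ∃ (d : ℕ) (q : Fin (d + 1) → MvPolynomial (Fin n) K), (∃ i, q i ≠ 0) ∧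
    ∑ i : Fin (d + 1), (q i : MvPowerSeries (Fin n) K) * f ^ (i : ℕ) = 0

/-! Write `J` for the Jacobian `(∂Hᵢ/∂yⱼ)(0,0)`. If `h` and `h'` have zero constant terms
and agree in total degrees `< N`, where `N ≥ 1`, then `H(x,h') - H(x,h) ≡ J (h' - h)` modulo terms
of degree `≥ N + 1`: every other term of the expansion multiplies `h' - h` by a series without
constant term. Since `J` is invertible, this gives uniqueness by induction on `N`. For existence,
the iteration `h₀ = 0`, `h_{N+1} = h_N - J⁻¹ H(x,h_N)` (Newton's method with the Jacobian
frozen at the origin) raises the order of `H(x,h_N)` by one at each step and changes `h_N` only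
in degrees `≥ N + 1`, so it converges coefficientwise to a solution. -/

namespace MvPowerSeries

variable (σ R : Type*) [CommRing R]

def orderIdeal (N : ℕ) : Ideal (MvPowerSeries σ R) where
  carrier := {f | (N : ℕ∞) ≤ f.order}
  add_mem' ha hb := (le_min ha hb).trans min_order_le_add
  zero_mem' := by simp
  smul_mem' c _ hf := hf.trans (le_add_self.trans le_order_mul)

variable {σ R}

theorem mem_orderIdeal {N : ℕ} {f : MvPowerSeries σ R} :
    f ∈ orderIdeal σ R N ↔ (N : ℕ∞) ≤ f.order := Iff.rfl

theorem mem_orderIdeal_iff_coeff {N : ℕ} {f : MvPowerSeries σ R} :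
    f ∈ orderIdeal σ R N ↔ ∀ d, d.degree < N → coeff d f = 0 :=
  ⟨fun hf _ hd => coeff_of_lt_order (lt_of_lt_of_le (by exact_mod_cast hd) hf), nat_le_order⟩

theorem mem_orderIdeal_one {f : MvPowerSeries σ R} :
    f ∈ orderIdeal σ R 1 ↔ constantCoeff f = 0 := by
  rw [mem_orderIdeal, Nat.cast_one, one_le_order_iff_constCoeff_eq_zero]

theorem orderIdeal_antitone : Antitone (orderIdeal σ R) :=
  fun _ _ hMN _ hf => (Nat.cast_le.mpr hMN).trans (mem_orderIdeal.mp hf)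

theorem mul_mem_orderIdeal {M N : ℕ} {f g : MvPowerSeries σ R} (hf : f ∈ orderIdeal σ R M)
    (hg : g ∈ orderIdeal σ R N) : f * g ∈ orderIdeal σ R (M + N) := by
  rw [mem_orderIdeal, Nat.cast_add]
  exact (add_le_add hf hg).trans le_order_mul

theorem eq_zero_of_forall_mem_orderIdeal {f : MvPowerSeries σ R}
    (hf : ∀ N, f ∈ orderIdeal σ R N) : f = 0 := by
  rw [← order_eq_top_iff]
  exact ENat.eq_top_iff_forall_ge.mpr hf

theorem exists_sub_mem_orderIdeal_of_succ_sub_mem {f : ℕ → MvPowerSeries σ R}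
    (hf : ∀ N, f (N + 1) - f N ∈ orderIdeal σ R (N + 1)) :
    ∃ g, ∀ N, g - f N ∈ orderIdeal σ R (N + 1) := by
  have stable : ∀ d M N, d.degree ≤ M → M ≤ N → coeff d (f N) = coeff d (f M) := by
    intro d M N hdM hMN
    induction N, hMN using Nat.le_induction with
    | base => rfl
    | succ N hMN ih =>
      rw [← ih, ← sub_eq_zero, ← map_sub]
      exact mem_orderIdeal_iff_coeff.mp (hf N) d (by omega)
  let g : MvPowerSeries σ R := fun d => coeff d (f d.degree)
  refine ⟨g, fun N => mem_orderIdeal_iff_coeff.mpr fun d hd => ?_⟩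
  rw [map_sub, sub_eq_zero, stable d d.degree N le_rfl (by omega)]
  rfl

theorem constantCoeff_aeval {τ : Type*} (g : τ → MvPowerSeries σ R) (P : MvPolynomial τ R) :
    constantCoeff (MvPolynomial.aeval g P)
      = MvPolynomial.eval (fun t => constantCoeff (g t)) P := by
  rw [MvPolynomial.map_aeval, ← c_eq_algebraMap, constantCoeff_comp_C]
  rfl

theorem aeval_sub_aeval_sub_sum_pderiv_mem_orderIdeal {τ : Type*} [Fintype τ] {N : ℕ}
    (hN : 1 ≤ N) {g g' : τ → MvPowerSeries σ R} (hg : ∀ t, constantCoeff (g t) = 0)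
    (hgg' : ∀ t, g' t - g t ∈ orderIdeal σ R N) (P : MvPolynomial τ R) :
    MvPolynomial.aeval g' P - MvPolynomial.aeval g P
        - ∑ t, C (MvPolynomial.eval 0 (MvPolynomial.pderiv t P)) * (g' t - g t)
      ∈ orderIdeal σ R (N + 1) := by
  induction P using MvPolynomial.induction_on with
  | C a => simp
  | add P Q hP hQ =>
    convert add_mem hP hQ using 1
    simp only [map_add, add_mul, Finset.sum_add_distrib]
    ring
  | mul_X P t hP =>
    set A := MvPolynomial.aeval g P
    set A' := MvPolynomial.aeval g' P
    set L := ∑ s, C (MvPolynomial.eval 0 (MvPolynomial.pderiv s P)) * (g' s - g s)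
    have hL : L ∈ orderIdeal σ R N :=
      Ideal.sum_mem _ fun s _ => Ideal.mul_mem_left _ _ (hgg' s)
    have hsum : ∑ s, C (MvPolynomial.eval 0 (MvPolynomial.pderiv s (P * MvPolynomial.X t)))
        * (g' s - g s) = C (MvPolynomial.eval 0 P) * (g' t - g t) := by
      classical
      simp [Derivation.leibniz, MvPolynomial.pderiv_X, Pi.single_apply, apply_ite, ite_mul]
    have hg' : ∀ s, constantCoeff (g' s) = 0 := fun s => by
      rw [← sub_add_cancel (g' s) (g s), map_add, hg s, add_zero, ← mem_orderIdeal_one]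
      exact orderIdeal_antitone hN (hgg' s)
    have hA' : A' - C (MvPolynomial.eval 0 P) ∈ orderIdeal σ R 1 := by
      rw [mem_orderIdeal_one, map_sub, constantCoeff_aeval]
      simp [hg']
    rw [hsum, map_mul, map_mul, MvPolynomial.aeval_X, MvPolynomial.aeval_X]
    have hexpand : A' * g' t - A * g t - C (MvPolynomial.eval 0 P) * (g' t - g t)
        = (A' - A - L) * g t + L * g t + (A' - C (MvPolynomial.eval 0 P)) * (g' t - g t) := by
      ring
    rw [hexpand]
    refine add_mem (add_mem (Ideal.mul_mem_right _ _ hP) ?_) ?_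
    · exact mul_mem_orderIdeal hL (mem_orderIdeal_one.mpr (hg t))
    · simpa only [add_comm 1 N] using mul_mem_orderIdeal hA' (hgg' t)

end MvPowerSeries

open Matrix

theorem Ideal.mulVec_mem {S ι κ : Type*} [CommSemiring S] [Fintype κ] (I : Ideal S)
    (A : Matrix ι κ S) {v : κ → S} (hv : ∀ j, v j ∈ I) (i : ι) : (A *ᵥ v) i ∈ I :=
  I.sum_mem fun j _ => I.mul_mem_left _ (hv j)

theorem Matrix.map_mulVec_map_mulVec_of_mul_eq_one {R S ι : Type*} [Semiring R] [CommSemiring S]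
    [Fintype ι] [DecidableEq ι] (f : R →+* S) {A B : Matrix ι ι R} (hAB : A * B = 1)
    (v : ι → S) : A.map f *ᵥ (B.map f *ᵥ v) = v := by
  rw [Matrix.mulVec_mulVec, ← Matrix.map_mul, hAB, Matrix.map_one f f.map_zero f.map_one,
    Matrix.one_mulVec]

namespace FormalImplicitFunction

open MvPowerSeries

variable (H : Fin p → MvPolynomial (Fin n ⊕ Fin p) K)

noncomputable def jacobianAtZero : Matrix (Fin p) (Fin p) K :=
  Matrix.of fun i j => MvPolynomial.eval 0 (MvPolynomial.pderiv (Sum.inr j) (H i))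

theorem substY_sub_substY_sub_jacobianAtZero_mem {N : ℕ} (hN : 1 ≤ N)
    {h h' : Fin p → MvPowerSeries (Fin n) K} (hh : ∀ j, constantCoeff (h j) = 0)
    (hhh' : ∀ j, h' j - h j ∈ orderIdeal (Fin n) K N) (i : Fin p) :
    substY (H i) h' - substY (H i) h - ((jacobianAtZero H).map C *ᵥ (h' - h)) i
      ∈ orderIdeal (Fin n) K (N + 1) := by
  have := aeval_sub_aeval_sub_sum_pderiv_mem_orderIdeal hN (g := Sum.elim X h)
    (g' := Sum.elim X h') (by rintro (j | j) <;> simp [hh]) (by rintro (j | j) <;> simp [hhh'])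
    (H i)
  simpa [substY, Fintype.sum_sum_type, Matrix.mulVec, dotProduct, jacobianAtZero] using this

theorem substY_sub_substY_mem {N : ℕ} (hN : 1 ≤ N)
    {h h' : Fin p → MvPowerSeries (Fin n) K} (hh : ∀ j, constantCoeff (h j) = 0)
    (hhh' : ∀ j, h' j - h j ∈ orderIdeal (Fin n) K N) (i : Fin p) :
    substY (H i) h' - substY (H i) h ∈ orderIdeal (Fin n) K N := by
  rw [← sub_add_cancel (substY (H i) h' - substY (H i) h)
    (((jacobianAtZero H).map C *ᵥ (h' - h)) i)]
  exact add_mem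
    (orderIdeal_antitone N.le_succ (substY_sub_substY_sub_jacobianAtZero_mem H hN hh hhh' i))
    (Ideal.mulVec_mem _ _ hhh' i)

theorem constantCoeff_substY {h : Fin p → MvPowerSeries (Fin n) K}
    (hh : ∀ j, constantCoeff (h j) = 0) (P : MvPolynomial (Fin n ⊕ Fin p) K) :
    constantCoeff (substY P h) = MvPolynomial.eval 0 P := by
  rw [substY, constantCoeff_aeval]
  congr
  ext (j | j) <;> simp [hh]

noncomputable def newtonIterate (B : Matrix (Fin p) (Fin p) K) :
    ℕ → Fin p → MvPowerSeries (Fin n) K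
  | 0 => 0
  | N + 1 => newtonIterate B N - B.map C *ᵥ fun i => substY (H i) (newtonIterate B N)

variable {H}

theorem newtonIterate_succ_sub (B : Matrix (Fin p) (Fin p) K) (N : ℕ) :
    newtonIterate H B (N + 1) - newtonIterate H B N
      = -(B.map C *ᵥ fun i => substY (H i) (newtonIterate H B N)) := by
  rw [newtonIterate, sub_sub_cancel_left]

theorem newtonIterate_succ_sub_mem {B : Matrix (Fin p) (Fin p) K} {N : ℕ}
    (hF : ∀ i, substY (H i) (newtonIterate H B N) ∈ orderIdeal (Fin n) K (N + 1)) (j : Fin p) :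
    newtonIterate H B (N + 1) j - newtonIterate H B N j ∈ orderIdeal (Fin n) K (N + 1) := by
  rw [← Pi.sub_apply, newtonIterate_succ_sub, Pi.neg_apply]
  exact neg_mem (Ideal.mulVec_mem _ _ hF j)

theorem newtonIterate_spec (hH0 : ∀ i, MvPolynomial.eval 0 (H i) = 0)
    {B : Matrix (Fin p) (Fin p) K} (hJB : jacobianAtZero H * B = 1) (N : ℕ) :
    (∀ j, constantCoeff (newtonIterate H B N j) = 0) ∧
      ∀ i, substY (H i) (newtonIterate H B N) ∈ orderIdeal (Fin n) K (N + 1) := by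
  induction N with
  | zero =>
    have hc : ∀ j, constantCoeff (newtonIterate H B 0 j) = 0 := fun j => by simp [newtonIterate]
    exact ⟨hc, fun i => mem_orderIdeal_one.mpr ((constantCoeff_substY hc _).trans (hH0 i))⟩
  | succ N ih =>
    obtain ⟨hc, hF⟩ := ih
    have hstep := newtonIterate_succ_sub_mem hF
    refine ⟨fun j => ?_, fun i => ?_⟩
    · rw [← sub_add_cancel (newtonIterate H B (N + 1) j) (newtonIterate H B N j), map_add,
        hc j, add_zero, ← mem_orderIdeal_one]
      exact orderIdeal_antitone (by omega) (hstep j)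
    · have key := substY_sub_substY_sub_jacobianAtZero_mem H (by omega) hc hstep i
      rwa [newtonIterate_succ_sub, Matrix.mulVec_neg,
        Matrix.map_mulVec_map_mulVec_of_mul_eq_one C hJB, Pi.neg_apply, sub_neg_eq_add,
        sub_add_cancel] at key

theorem exists_solution (hH0 : ∀ i, MvPolynomial.eval 0 (H i) = 0)
    {B : Matrix (Fin p) (Fin p) K} (hJB : jacobianAtZero H * B = 1) :
    ∃ h : Fin p → MvPowerSeries (Fin n) K,
      (∀ j, constantCoeff (h j) = 0) ∧ ∀ i, substY (H i) h = 0 := by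
  have hspec := newtonIterate_spec hH0 hJB
  choose h hlim using fun j => exists_sub_mem_orderIdeal_of_succ_sub_mem
    (f := (newtonIterate H B · j)) fun N => newtonIterate_succ_sub_mem (hspec N).2 j
  have hc (j : Fin p) : constantCoeff (h j) = 0 := by
    simpa [newtonIterate] using mem_orderIdeal_one.mp (hlim j 0)
  refine ⟨h, hc, fun i => eq_zero_of_forall_mem_orderIdeal fun N => ?_⟩
  refine orderIdeal_antitone N.le_succ ?_
  rw [← sub_add_cancel (substY (H i) h) (substY (H i) (newtonIterate H B N))]
  exact add_mem (substY_sub_substY_mem H (by omega) (hspec N).1 (fun j => hlim j N) i)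
    ((hspec N).2 i)

theorem solution_unique {B : Matrix (Fin p) (Fin p) K} (hBJ : B * jacobianAtZero H = 1)
    {h h' : Fin p → MvPowerSeries (Fin n) K}
    (hc : ∀ j, constantCoeff (h j) = 0) (hs : ∀ i, substY (H i) h = 0)
    (hc' : ∀ j, constantCoeff (h' j) = 0) (hs' : ∀ i, substY (H i) h' = 0) : h = h' := by
  have agree (N : ℕ) (j : Fin p) : h' j - h j ∈ orderIdeal (Fin n) K (N + 1) := by
    induction N generalizing j with
    | zero => rw [mem_orderIdeal_one, map_sub, hc, hc', sub_zero]
    | succ N ih =>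
      have hJ (i : Fin p) : ((jacobianAtZero H).map C *ᵥ (h' - h)) i
          ∈ orderIdeal (Fin n) K (N + 1 + 1) := by
        simpa [hs, hs'] using substY_sub_substY_sub_jacobianAtZero_mem H (by omega) hc ih i
      rw [← Pi.sub_apply, ← Matrix.map_mulVec_map_mulVec_of_mul_eq_one C hBJ (h' - h)]
      exact Ideal.mulVec_mem _ _ hJ j
  funext j
  refine (sub_eq_zero.mp (eq_zero_of_forall_mem_orderIdeal fun N => ?_)).symm
  exact orderIdeal_antitone N.le_succ (agree N j)

end FormalImplicitFunction

open FormalImplicitFunction in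
/-- Formal implicit function theorem. -/
theorem formal_implicit_function (H : Fin p → MvPolynomial (Fin n ⊕ Fin p) K)
    (hmc : IsMotherCode H) :
    ∃! h : Fin p → MvPowerSeries (Fin n) K,
      (∀ i, MvPowerSeries.constantCoeff (h i) = 0) ∧
      (∀ i, substY (H i) h = 0) := by
  obtain ⟨hH0, J, hJ⟩ := hmc
  replace hJ : (J : Matrix (Fin p) (Fin p) K) = jacobianAtZero H := hJ
  obtain ⟨h, hc, hs⟩ := exists_solution hH0 (B := ↑J⁻¹) (by rw [← hJ, J.mul_inv])
  exact ⟨h, ⟨hc, hs⟩, fun h' ⟨hc', hs'⟩ =>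
    (solution_unique (B := ↑J⁻¹) (by rw [← hJ, J.inv_mul]) hc hs hc' hs').symm⟩
end

section
/- Let K be a field, H = (H₁,…,H_p) ∈ K[x,y]^p a mother code with baby series vector h = (h₁,…,h_p) ∈ K[[x]]^p. Then in the formal power series ring K[[x₁,…,xₙ,y₁,…,y_p]], the ideal generated by H₁,…,H_p equals the ideal generated by y₁ − h₁, …, y_p − h_p. -/
variable {K : Type*} [Field K] {n p : ℕ}

open scoped Classical in
/-- The natural inclusion `K[[x]] → K[[x,y]]`. -/
noncomputable def inclPS (f : MvPowerSeries (Fin n) K) :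
    MvPowerSeries (Fin n ⊕ Fin p) K :=
  fun e =>
    if ∀ j : Fin p, e (Sum.inr j) = 0 then
      MvPowerSeries.coeff (Finsupp.comapDomain Sum.inl e Sum.inl_injective.injOn) f
    else 0

/-! Expanding each `Hᵢ` around `y = h` gives `Hᵢ = Hᵢ(x, h) + ∑ⱼ gᵢⱼ (yⱼ - hⱼ)` in `K[[x,y]]`,
where the constant term of `gᵢⱼ` is `∂Hᵢ/∂yⱼ(0,0)`. As `Hᵢ(x, h) = 0`, the vector `H` is the
image of `y - h` under the matrix `(gᵢⱼ)`, whose determinant has the Jacobian determinant as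
constant term and is therefore a unit of `K[[x,y]]`. -/

open MvPowerSeries
open scoped Matrix

theorem MvPolynomial.aeval_X_eq_coe {σ R : Type*} [CommSemiring R] (P : MvPolynomial σ R) :
    aeval (MvPowerSeries.X : σ → MvPowerSeries σ R) P = P := by
  induction P using MvPolynomial.induction_on with
  | C a => simp [MvPowerSeries.algebraMap_apply]
  | add P Q hP hQ => simp [hP, hQ]
  | mul_X P s hP => simp [hP]

theorem MvPolynomial.exists_aeval_sub_aeval_eq_sum {σ R S : Type*} [Fintype σ] [DecidableEq σ]
    [CommRing R] [CommRing S] [Algebra R S] (P : MvPolynomial σ R) (u v : σ → S) :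
    ∃ g : σ → S, aeval u P - aeval v P = ∑ s, g s * (u s - v s) ∧
      ∀ s, g s - aeval v (pderiv s P) ∈ Ideal.span (Set.range (u - v)) := by
  induction P using MvPolynomial.induction_on with
  | C a => exact ⟨0, by simp, fun s => by simp⟩
  | add P Q hP hQ =>
    obtain ⟨gP, hPsum, hPideal⟩ := hP
    obtain ⟨gQ, hQsum, hQideal⟩ := hQ
    refine ⟨gP + gQ, ?_, fun s => ?_⟩
    · simp only [map_add, Pi.add_apply, add_mul, Finset.sum_add_distrib, ← hPsum, ← hQsum]
      ring
    · simpa only [map_add, Pi.add_apply, add_sub_add_comm] using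
        Ideal.add_mem _ (hPideal s) (hQideal s)
  | mul_X P t hP =>
    obtain ⟨g, hsum, hideal⟩ := hP
    refine ⟨fun s => g s * u t + if s = t then aeval v P else 0, ?_, fun s => ?_⟩
    · simp only [map_mul, aeval_X, add_mul, Finset.sum_add_distrib, ite_mul, zero_mul,
        Finset.sum_ite_eq', Finset.mem_univ, if_true, mul_right_comm _ (u t), ← Finset.sum_mul,
        ← hsum]
      ring
    · have key : (g s * u t + if s = t then aeval v P else 0) - aeval v (pderiv s (P * X t)) =
          (g s - aeval v (pderiv s P)) * u t + aeval v (pderiv s P) * (u t - v t) := by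
        rcases eq_or_ne s t with rfl | hst
        · simp [Derivation.leibniz]
          ring
        · simp [Derivation.leibniz, hst]
          ring
      rw [key]
      exact Ideal.add_mem _ (Ideal.mul_mem_right _ _ (hideal s))
        (Ideal.mul_mem_left _ _ (Ideal.subset_span ⟨t, rfl⟩))

theorem Ideal.span_range_mulVec_le {ι κ S : Type*} [Fintype ι] [CommSemiring S]
    (M : Matrix κ ι S) (b : ι → S) :
    Ideal.span (Set.range (M *ᵥ b)) ≤ Ideal.span (Set.range b) := by
  rw [Ideal.span_le]
  rintro _ ⟨k, rfl⟩
  exact Ideal.sum_mem _ fun i _ => Ideal.mul_mem_left _ _ (Ideal.subset_span ⟨i, rfl⟩)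

theorem Ideal.span_range_mulVec_of_isUnit_det {ι S : Type*} [Fintype ι] [DecidableEq ι]
    [CommRing S] {M : Matrix ι ι S} (hM : IsUnit M.det) (b : ι → S) :
    Ideal.span (Set.range (M *ᵥ b)) = Ideal.span (Set.range b) := by
  refine le_antisymm (Ideal.span_range_mulVec_le M b) ?_
  simpa [Matrix.mulVec_mulVec, Matrix.nonsing_inv_mul M hM] using
    Ideal.span_range_mulVec_le M⁻¹ (M *ᵥ b)

theorem inclPS_eq_rename (f : MvPowerSeries (Fin n) K) :
    (inclPS f : MvPowerSeries (Fin n ⊕ Fin p) K) = rename Sum.inl f := by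
  ext e
  rw [coeff_apply, inclPS]
  split_ifs with he
  · have he' :
        e = Finsupp.embDomain .inl (Finsupp.comapDomain Sum.inl e Sum.inl_injective.injOn) := by
      ext (s | j)
      · simp
      · simp [he]
    conv_rhs => rw [he']
    exact (coeff_embDomain_rename .inl f _).symm
  · push Not at he
    obtain ⟨j, hj⟩ := he
    refine (coeff_rename_eq_zero _ _ ?_).symm
    rintro ⟨c, rfl⟩
    exact hj (Finsupp.mapDomain_of_notMem_range c _ (by simp))

theorem exists_coe_eq_inclPS_substY_add_sum (h : Fin p → MvPowerSeries (Fin n) K)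
    (h0 : ∀ j, constantCoeff (h j) = 0) (P : MvPolynomial (Fin n ⊕ Fin p) K) :
    ∃ g : Fin p → MvPowerSeries (Fin n ⊕ Fin p) K,
      (P : MvPowerSeries (Fin n ⊕ Fin p) K) =
        inclPS (substY P h) + ∑ j, g j * (X (Sum.inr j) - inclPS (h j)) ∧
      ∀ j, constantCoeff (g j) = MvPolynomial.eval 0 (MvPolynomial.pderiv (Sum.inr j) P) := by
  classical
  set v : Fin n ⊕ Fin p → MvPowerSeries (Fin n ⊕ Fin p) K :=
    Sum.elim (fun i => X (Sum.inl i)) fun j => inclPS (h j)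
  obtain ⟨g, hsum, hideal⟩ := MvPolynomial.exists_aeval_sub_aeval_eq_sum P X v
  have hv : MvPolynomial.aeval v P = inclPS (substY P h) := by
    rw [inclPS_eq_rename, substY, MvPolynomial.comp_aeval_apply]
    congr 2
    funext s
    cases s <;> simp [v, inclPS_eq_rename]
  have hv0 : (fun s => constantCoeff (v s)) = 0 := by
    funext s
    cases s <;> simp [v, inclPS_eq_rename, h0]
  have hker : Ideal.span (Set.range (X - v)) ≤ RingHom.ker constantCoeff := by
    rw [Ideal.span_le]
    rintro _ ⟨s, rfl⟩
    simp [RingHom.mem_ker, congrFun hv0 s]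
  refine ⟨g ∘ Sum.inr, ?_, fun j => ?_⟩
  · rw [← hv, ← MvPolynomial.aeval_X_eq_coe, ← sub_eq_iff_eq_add', hsum, Fintype.sum_sum_type]
    simp [v]
  · have hj := hker (hideal (Sum.inr j))
    rw [RingHom.mem_ker, map_sub, sub_eq_zero] at hj
    rw [Function.comp_apply, hj, MvPolynomial.map_aeval, hv0]
    simp [MvPowerSeries.algebraMap_apply]

/-- The ideal of `K[[x,y]]` generated by the components of a mother code `H` equals the
ideal generated by `y₁ − h₁, …, y_p − h_p`, where `h` is the baby series vector of `H`. -/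
theorem mother_code_ideal_eq (H : Fin p → MvPolynomial (Fin n ⊕ Fin p) K)
    (hmc : IsMotherCode H) (h : Fin p → MvPowerSeries (Fin n) K)
    (h0 : ∀ i, MvPowerSeries.constantCoeff (h i) = 0)
    (hH : ∀ i, substY (H i) h = 0) :
    Ideal.span (Set.range fun i => ((H i : MvPolynomial (Fin n ⊕ Fin p) K) :
        MvPowerSeries (Fin n ⊕ Fin p) K)) =
    Ideal.span (Set.range fun i =>
      MvPowerSeries.X (Sum.inr i : Fin n ⊕ Fin p) - inclPS (h i)) := by
  classical
  choose g hg hg0 using fun i => exists_coe_eq_inclPS_substY_add_sum h h0 (H i)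
  have hH_mulVec : (fun i => ((H i : MvPolynomial (Fin n ⊕ Fin p) K) :
      MvPowerSeries (Fin n ⊕ Fin p) K)) =
      Matrix.of g *ᵥ fun j => X (Sum.inr j) - inclPS (h j) := by
    funext i
    simp [hg i, hH i, inclPS_eq_rename, Matrix.mulVec, dotProduct]
  have hdet : IsUnit (Matrix.of g).det := by
    rw [isUnit_iff_constantCoeff, RingHom.map_det, ← Matrix.isUnit_iff_isUnit_det]
    convert hmc.2 using 2
    ext i j
    exact hg0 i j
  rw [hH_mulVec, Ideal.span_range_mulVec_of_isUnit_det hdet]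
end

section
/- Let K be a field and g = (x − y²)(y − x²) ∈ K[[x,y]]. There exists a unique power series r ∈ K[[T]] with r(0) = 0 such that xy − r(x) − r(y) lies in the ideal of K[[x,y]] generated by g; moreover this r satisfies the functional equation r(T) + r(T²) = T³ in K[[T]]. -/
/-! Write `E` for the substitution `T ↦ T²`, resp. `x ↦ x², y ↦ y²`, and `F = xy − r(x) − r(y)`.
The substitution `x ↦ T², y ↦ T` kills `g` and sends `F` to `T³ − r − E r`, so `F ∈ (g)` forces
the functional equation `r + E r = T³`. Its solution with `r(0) = 0` exists by a recursion on
coefficients, and is unique because `E` doubles orders. Conversely, the functional equation gives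
`F + E F = g`, hence `F = ∑ₖ (-1)ᵏ Eᵏ g`; since `E g = g u` with `u = (x + y²)(y + x²)`, this is
`g · ∑ₖ (-1)ᵏ ∏_{j<k} Eʲ u`, which converges because its `k`-th term has order at least `k`. -/

variable {K : Type*} [Field K]

open scoped Classical in
/-- For `r ∈ K[[T]]`, the power series `r(xᵢ) ∈ K[[x₀,x₁]]` obtained by substituting the
variable `xᵢ` for `T`. -/
noncomputable def rSub (i : Fin 2) (r : PowerSeries K) : MvPowerSeries (Fin 2) K :=
  fun e =>
    if e = Finsupp.single i (e i) then PowerSeries.coeff (e i) r else 0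

/-- For `r ∈ K[[T]]`, the power series `r(T²)` obtained by substituting `T²` for `T`. -/
noncomputable def compSq (r : PowerSeries K) : PowerSeries K :=
  PowerSeries.mk fun m => if 2 ∣ m then PowerSeries.coeff (m / 2) r else 0

/-- The series `g = (x − y²)(y − x²) ∈ K[[x,y]]`. -/
noncomputable def gEx (K : Type*) [Field K] : MvPowerSeries (Fin 2) K :=
  (MvPowerSeries.X 0 - MvPowerSeries.X 1 ^ 2) * (MvPowerSeries.X 1 - MvPowerSeries.X 0 ^ 2)

open Filter Finset MvPowerSeries.WithPiTopology

namespace PowerSeries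

variable {R : Type*} [CommRing R] {p : ℕ}

noncomputable def invOneAddExpandCoeff (p : ℕ) (f : R⟦X⟧) (n : ℕ) : R :=
  if h : 0 < n ∧ 1 < p ∧ p ∣ n then
    have : n / p < n := Nat.div_lt_self h.1 h.2.1
    coeff n f - invOneAddExpandCoeff p f (n / p)
  else coeff n f

theorem exists_add_expand_eq (hp : 1 < p) {f : R⟦X⟧} (hf : constantCoeff f = 0) :
    ∃ r : R⟦X⟧, constantCoeff r = 0 ∧ r + expand p (Nat.ne_zero_of_lt hp) r = f := by
  have hc0 : invOneAddExpandCoeff p f 0 = 0 := by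
    rw [invOneAddExpandCoeff, dif_neg (by omega), coeff_zero_eq_constantCoeff_apply, hf]
  refine ⟨mk (invOneAddExpandCoeff p f), by simpa using hc0, ?_⟩
  ext n
  rw [map_add, coeff_expand, coeff_mk, coeff_mk]
  rcases Nat.eq_zero_or_pos n with rfl | hn
  · simp [hc0, hf]
  by_cases hpn : p ∣ n
  · rw [if_pos hpn, invOneAddExpandCoeff, dif_pos ⟨hn, hp, hpn⟩, sub_add_cancel]
  · rw [if_neg hpn, add_zero, invOneAddExpandCoeff, dif_neg (by tauto)]

/-- A nonzero `d` with `d(0) = 0` has finite positive order, while `expand p d` has `p` times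
that order, so they cannot cancel. -/
theorem eq_zero_of_add_expand_eq_zero (hp : 1 < p) {d : R⟦X⟧} (h0 : constantCoeff d = 0)
    (h : d + expand p (Nat.ne_zero_of_lt hp) d = 0) : d = 0 := by
  have hfix : d.order = p * d.order := by
    rw [← nsmul_eq_mul, ← order_expand p (Nat.ne_zero_of_lt hp), ← order_neg,
      ← eq_neg_of_add_eq_zero_right h]
  by_contra hd
  obtain ⟨n, hn⟩ := ENat.ne_top_iff_exists.mp (order_eq_top.not.mpr hd)
  have hn0 : n ≠ 0 := by
    have := order_ne_zero_iff_constCoeff_eq_zero.mpr h0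
    rw [← hn] at this
    exact_mod_cast this
  rw [← hn] at hfix
  have : n = p * n := by exact_mod_cast hfix
  nlinarith [Nat.pos_of_ne_zero hn0]

theorem existsUnique_add_expand_eq (hp : 1 < p) {f : R⟦X⟧} (hf : constantCoeff f = 0) :
    ∃! r : R⟦X⟧, constantCoeff r = 0 ∧ r + expand p (Nat.ne_zero_of_lt hp) r = f := by
  obtain ⟨r, hr0, hr⟩ := exists_add_expand_eq hp hf
  refine ⟨r, ⟨hr0, hr⟩, fun r' ⟨hr'0, hr'⟩ ↦ sub_eq_zero.mp ?_⟩
  refine eq_zero_of_add_expand_eq_zero hp (by simp [hr0, hr'0]) ?_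
  rw [map_sub, sub_add_sub_comm, hr, hr', sub_self]

end PowerSeries

namespace MvPowerSeries

variable {σ τ R : Type*} [CommRing R] {p : ℕ}

theorem subst_substX {a : σ → MvPowerSeries τ R} (ha : HasSubst a) (i : σ)
    (r : PowerSeries R) :
    subst a (r.subst (X i : MvPowerSeries σ R)) = r.subst (a i) := by
  rw [PowerSeries.subst, subst_comp_subst_apply (PowerSeries.HasSubst.X i).const ha]
  simp [subst_X ha, PowerSeries.subst]

theorem expand_substX (hp : p ≠ 0) (i : σ) (r : PowerSeries R) :
    expand p hp (r.subst (X i : MvPowerSeries σ R))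
      = (PowerSeries.expand p hp r).subst (X i : MvPowerSeries σ R) := by
  rw [PowerSeries.expand_subst _ _ (PowerSeries.HasSubst.X i), expand_X, PowerSeries.expand_apply,
    PowerSeries.subst_comp_subst_apply (PowerSeries.HasSubst.X_pow hp) (PowerSeries.HasSubst.X i),
    PowerSeries.subst_pow (PowerSeries.HasSubst.X i),
    PowerSeries.subst_X (PowerSeries.HasSubst.X i)]

theorem expand_pow_succ (hp : p ≠ 0) (n : ℕ) (f : MvPowerSeries σ R) :
    expand (p ^ (n + 1)) (pow_ne_zero _ hp) f
      = expand (p ^ n) (pow_ne_zero _ hp) (expand p hp f) :=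
  expand_mul (p ^ n) (pow_ne_zero _ hp) p hp f

theorem sum_range_neg_one_pow_mul_expand_pow (hp : p ≠ 0) {F G : MvPowerSeries σ R}
    (h : F + expand p hp F = G) (n : ℕ) :
    ∑ k ∈ range n, (-1) ^ k * expand (p ^ k) (pow_ne_zero _ hp) G
      = F - (-1) ^ n * expand (p ^ n) (pow_ne_zero _ hp) F := by
  induction n with
  | zero => simp
  | succ n ih =>
    rw [sum_range_succ, ih, ← h, map_add, ← expand_pow_succ]
    ring

theorem expand_pow_eq_mul_prod (hp : p ≠ 0) {G u : MvPowerSeries σ R}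
    (h : expand p hp G = G * u) (n : ℕ) :
    expand (p ^ n) (pow_ne_zero _ hp) G
      = G * ∏ j ∈ range n, expand (p ^ j) (pow_ne_zero _ hp) u := by
  induction n with
  | zero => simp
  | succ n ih => rw [expand_pow_succ hp, h, map_mul, ih, prod_range_succ, mul_assoc]

theorem order_le_order_neg_one_pow_mul (n : ℕ) (f : MvPowerSeries σ R) :
    f.order ≤ ((-1) ^ n * f).order :=
  le_add_self.trans le_order_mul

theorem natCast_le_order_prod {ι : Type*} (s : Finset ι) {f : ι → MvPowerSeries σ R}
    (hf : ∀ i ∈ s, constantCoeff (f i) = 0) : (s.card : ℕ∞) ≤ (∏ i ∈ s, f i).order :=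
  calc (s.card : ℕ∞) = ∑ _i ∈ s, 1 := by simp
    _ ≤ ∑ i ∈ s, (f i).order :=
      sum_le_sum fun i hi ↦ one_le_order_iff_constCoeff_eq_zero.mpr (hf i hi)
    _ ≤ (∏ i ∈ s, f i).order := le_order_prod f s

theorem natCast_le_order_expand_pow (hp : 1 < p) {f : MvPowerSeries σ R}
    (hf : constantCoeff f = 0) (n : ℕ) :
    (n : ℕ∞) ≤ (expand (p ^ n) (pow_ne_zero _ (Nat.ne_zero_of_lt hp)) f).order := by
  rw [order_expand]
  calc (n : ℕ∞) ≤ p ^ n • 1 := by rw [nsmul_one]; exact_mod_cast (Nat.lt_pow_self hp).le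
    _ ≤ p ^ n • f.order := by gcongr; exact one_le_order_iff_constCoeff_eq_zero.mpr hf

theorem summable_of_natCast_le_order [TopologicalSpace R] {f : ℕ → MvPowerSeries σ R}
    (h : ∀ n : ℕ, (n : ℕ∞) ≤ (f n).order) : Summable f :=
  summable_of_tendsto_order_atTop_nhds_top
    (tendsto_nhds_top_mono ENat.tendsto_natCast_nhds_top (Eventually.of_forall h))

theorem hasSum_neg_one_pow_mul_expand_pow [TopologicalSpace R] [IsTopologicalRing R] [T2Space R]
    (hp : 1 < p) {F G : MvPowerSeries σ R} (hF : constantCoeff F = 0)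
    (h : F + expand p (Nat.ne_zero_of_lt hp) F = G) :
    HasSum (fun k ↦ (-1) ^ k * expand (p ^ k) (pow_ne_zero _ (Nat.ne_zero_of_lt hp)) G) F := by
  have hG : constantCoeff G = 0 := by simp [← h, hF]
  have hsum : Summable
      (fun k ↦ (-1) ^ k * expand (p ^ k) (pow_ne_zero _ (Nat.ne_zero_of_lt hp)) G) :=
    summable_of_natCast_le_order fun n ↦
      (natCast_le_order_expand_pow hp hG n).trans (order_le_order_neg_one_pow_mul _ _)
  have hrem : Tendsto
      (fun n ↦ (-1) ^ n * expand (p ^ n) (pow_ne_zero _ (Nat.ne_zero_of_lt hp)) F)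
      atTop (nhds 0) :=
    (summable_of_natCast_le_order fun n ↦ (natCast_le_order_expand_pow hp hF n).trans
      (order_le_order_neg_one_pow_mul _ _)).tendsto_atTop_zero
  have hpartial := hsum.hasSum.tendsto_sum_nat
  simp_rw [sum_range_neg_one_pow_mul_expand_pow _ h] at hpartial
  have hlim : Tendsto
      (fun n ↦ F - (-1) ^ n * expand (p ^ n) (pow_ne_zero _ (Nat.ne_zero_of_lt hp)) F)
      atTop (nhds F) := by
    simpa using tendsto_const_nhds.sub hrem
  exact tendsto_nhds_unique hpartial hlim ▸ hsum.hasSum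

theorem mem_span_singleton_of_add_expand_eq (hp : 1 < p) {F G u : MvPowerSeries σ R}
    (hF : constantCoeff F = 0) (hu : constantCoeff u = 0)
    (hG : expand p (Nat.ne_zero_of_lt hp) G = G * u)
    (h : F + expand p (Nat.ne_zero_of_lt hp) F = G) : F ∈ Ideal.span {G} := by
  let _ : TopologicalSpace R := ⊥
  have : DiscreteTopology R := ⟨rfl⟩
  set P : ℕ → MvPowerSeries σ R :=
    fun k ↦ (-1) ^ k * ∏ j ∈ range k, expand (p ^ j) (pow_ne_zero _ (Nat.ne_zero_of_lt hp)) u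
  have hP : Summable P := summable_of_natCast_le_order fun n ↦ by
    simpa using (natCast_le_order_prod (range n) fun j _ ↦ by simp [hu]).trans
      (order_le_order_neg_one_pow_mul n _)
  have hGP := hP.hasSum.mul_left G
  simp_rw [P, mul_left_comm G, ← expand_pow_eq_mul_prod _ hG] at hGP
  exact Ideal.mem_span_singleton'.mpr ⟨∑' k, P k,
    by rw [mul_comm]; exact hGP.unique (hasSum_neg_one_pow_mul_expand_pow hp hF h)⟩

end MvPowerSeries

open MvPowerSeries

theorem rSub_eq_subst (i : Fin 2) (r : PowerSeries K) :
    rSub i r = PowerSeries.subst (X i) r := by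
  ext e
  rw [PowerSeries.coeff_subst_single]
  rfl

theorem compSq_eq_expand (r : PowerSeries K) : compSq r = PowerSeries.expand 2 two_ne_zero r := by
  ext n
  rw [PowerSeries.coeff_expand, compSq, PowerSeries.coeff_mk]

theorem constantCoeff_rSub (i : Fin 2) (r : PowerSeries K) :
    constantCoeff (rSub i r) = PowerSeries.constantCoeff r := by
  rw [← coeff_zero_eq_constantCoeff_apply, rSub_eq_subst, PowerSeries.coeff_subst_single]
  simp

theorem expand_two_gEx :
    expand 2 two_ne_zero (gEx K) = gEx K * ((X 0 + X 1 ^ 2) * (X 1 + X 0 ^ 2)) := by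
  simp only [gEx, map_mul, map_sub, map_pow, expand_X]
  ring

theorem add_expand_two_eq_gEx {r : PowerSeries K}
    (hr : r + PowerSeries.expand 2 two_ne_zero r = PowerSeries.X ^ 3) :
    X 0 * X 1 - (rSub 0 r + rSub 1 r) + expand 2 two_ne_zero (X 0 * X 1 - (rSub 0 r + rSub 1 r))
      = gEx K := by
  have hX (i : Fin 2) : rSub i r + expand 2 two_ne_zero (rSub i r) = X i ^ 3 := by
    rw [rSub_eq_subst, expand_substX, ← PowerSeries.subst_add (PowerSeries.HasSubst.X i), hr,
      PowerSeries.subst_pow (PowerSeries.HasSubst.X i),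
      PowerSeries.subst_X (PowerSeries.HasSubst.X i)]
  simp only [map_sub, map_add, map_mul, expand_X]
  rw [gEx]
  linear_combination -hX 0 - hX 1

theorem add_expand_two_eq_of_mem {r : PowerSeries K}
    (h : X 0 * X 1 - (rSub 0 r + rSub 1 r) ∈ Ideal.span {gEx K}) :
    r + PowerSeries.expand 2 two_ne_zero r = PowerSeries.X ^ 3 := by
  set a : Fin 2 → PowerSeries K := ![PowerSeries.X ^ 2, PowerSeries.X]
  have ha : HasSubst a :=
    hasSubst_of_constantCoeff_zero fun s ↦ by
      fin_cases s <;> simp [a, ← PowerSeries.constantCoeff.eq_def]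
  have hg : subst a (gEx K) = 0 := by
    simp [a, gEx, subst_mul ha, subst_sub ha, subst_pow ha, subst_X ha]
  obtain ⟨q, hq⟩ := Ideal.mem_span_singleton'.mp h
  have hF := congrArg (subst a) hq
  rw [subst_mul ha, hg, mul_zero, subst_sub ha, subst_add ha, subst_mul ha, rSub_eq_subst,
    rSub_eq_subst, subst_substX ha, subst_substX ha, subst_X ha, subst_X ha] at hF
  simp only [a, Matrix.cons_val_zero, Matrix.cons_val_one, Matrix.cons_val_fin_one,
    PowerSeries.X_subst] at hF
  rw [PowerSeries.expand_apply]
  linear_combination hF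

/-- Example 5.2: there is a unique `r ∈ K[[T]]` with `r(0) = 0` such that
`xy − r(x) − r(y)` lies in the ideal generated by `g = (x − y²)(y − x²)`; moreover this `r`
satisfies `r(T) + r(T²) = T³`. -/
theorem remainder_functional_equation :
    ∃ r : PowerSeries K,
      (PowerSeries.constantCoeff r = 0 ∧
        MvPowerSeries.X 0 * MvPowerSeries.X 1 - (rSub 0 r + rSub 1 r) ∈
          Ideal.span {gEx K}) ∧
      (∀ r' : PowerSeries K,
        PowerSeries.constantCoeff r' = 0 →
        MvPowerSeries.X 0 * MvPowerSeries.X 1 - (rSub 0 r' + rSub 1 r') ∈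
          Ideal.span {gEx K} → r' = r) ∧
      r + compSq r = PowerSeries.X ^ 3 := by
  obtain ⟨r, ⟨hr0, hr⟩, huniq⟩ :=
    PowerSeries.existsUnique_add_expand_eq one_lt_two (f := (PowerSeries.X ^ 3 : PowerSeries K))
      (by simp)
  refine ⟨r, ⟨hr0, ?_⟩, fun r' hr'0 hr' ↦ huniq r' ⟨hr'0, add_expand_two_eq_of_mem hr'⟩,
    by rwa [compSq_eq_expand]⟩
  exact mem_span_singleton_of_add_expand_eq one_lt_two (by simp [constantCoeff_rSub, hr0])
    (by simp) expand_two_gEx (add_expand_two_eq_gEx hr)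
end
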